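/- arXiv:math/0410575 — 9 statements merged into one kernel-verified Lean document; each statement's English description precedes it below -/
import Mathlib

section
/- For every integer n ≥ 1, the identity n·s·f_n + (n+1)·t·f_{n+1} + (n+2)·f_{n+2} = 0 holds in the polynomial ring ℝ[s,t]. -/
open MvPolynomial Finset

/-- The weighted-degree-`k` component of `log(1+s+t)` in `ℝ[s,t]`,
where `s = X 0` has degree 2 and `t = X 1` has degree 1. -/
noncomputable def f (k : ℕ) : MvPolynomial (Fin 2) ℝ :=
  (-1 : ℝ) ^ (k + 1) •
    ∑ i ∈ Finset.range (k / 2 + 1),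
      (((-1 : ℝ) ^ i / ((k : ℝ) - i)) * (Nat.choose (k - i) i)) •
        (X 0 ^ i * X 1 ^ (k - 2 * i))

noncomputable def co (k i : ℕ) : ℝ :=
  (-1 : ℝ) ^ (k + 1) * (((-1 : ℝ) ^ i / ((k : ℝ) - i)) * (Nat.choose (k - i) i))

lemma f_eq (k N : ℕ) (h : k / 2 + 1 ≤ N) :
    f k = ∑ i ∈ Finset.range N, C (co k i) * (X 0 ^ i * X 1 ^ (k - 2 * i)) := by
  unfold f
  rw [Finset.smul_sum,
    Finset.sum_subset (Finset.range_subset_range.mpr h)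
      (by
        intro i hi hni
        simp only [Finset.mem_range, not_lt] at hi hni
        have hlt : k - i < i := by omega
        simp [Nat.choose_eq_zero_of_lt hlt])]
  apply Finset.sum_congr rfl
  intro i _
  rw [smul_smul, smul_eq_C_mul, co]

lemma aux0 (n i : ℕ) (hn : 1 ≤ n) (hi : 2*i ≤ n)
    (a b c : ℝ) (hc : c = a + b) (hb : b * ((i:ℝ)+1) = a * ((n:ℝ) - 2*i)) :
    (n:ℝ) * a / ((n:ℝ) - i) + ((n:ℝ)+1) * b / ((n:ℝ) - i)
      - ((n:ℝ)+2) * c / ((n:ℝ)+1 - i) = 0 := by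
  have h1 : (n:ℝ) - i ≠ 0 := by
    have : i < n := by omega
    have : (i:ℝ) < n := by exact_mod_cast this
    linarith
  have h2 : (n:ℝ) + 1 - i ≠ 0 := by
    have : i ≤ n := by omega
    have : (i:ℝ) ≤ n := by exact_mod_cast this
    linarith
  subst hc
  field_simp
  nlinarith [hb, sq_nonneg a]

lemma aux (n i : ℕ) (hn : 1 ≤ n) (hi : 2*i ≤ n) :
    (n:ℝ) * ((n-i).choose i : ℝ) / ((n:ℝ) - i)
      + ((n:ℝ)+1) * ((n-i).choose (i+1) : ℝ) / ((n:ℝ) - i)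
      - ((n:ℝ)+2) * (((n-i)+1).choose (i+1) : ℝ) / ((n:ℝ)+1 - i) = 0 := by
  apply aux0 n i hn hi
  · rw [Nat.choose_succ_succ]; push_cast; ring
  · have h := Nat.choose_succ_right_eq (n-i) i
    have h5 : n - i - i = n - 2*i := by omega
    rw [h5] at h
    have h6 : ((n - 2*i : ℕ) : ℝ) = (n:ℝ) - 2*(i:ℝ) := by
      push_cast [Nat.cast_sub hi]; ring
    rw [← h6]
    exact_mod_cast h

lemma key (n i : ℕ) (hn : 1 ≤ n) (hi : 2*i ≤ n) :
    (n:ℝ) * co n i + (((n:ℝ)+1) * co (n+1) (i+1) + ((n:ℝ)+2) * co (n+2) (i+1)) = 0 := by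
  have e1 : n + 1 - (i+1) = n - i := by omega
  have e2 : n + 2 - (i+1) = (n - i) + 1 := by omega
  have h := aux n i hn hi
  unfold co
  rw [e1, e2]
  push_cast
  linear_combination ((-1:ℝ)^(n+i+1)) * h

lemma key0 (n : ℕ) (hn : 1 ≤ n) :
    ((n:ℝ)+1) * co (n+1) 0 + ((n:ℝ)+2) * co (n+2) 0 = 0 := by
  unfold co
  push_cast [Nat.choose_zero_right]
  have h1 : (n:ℝ) + 1 ≠ 0 := by positivity
  have h2 : (n:ℝ) + 2 ≠ 0 := by positivity
  field_simp
  ring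

theorem stmt0 (n : ℕ) (hn : 1 ≤ n) :
    (n : MvPolynomial (Fin 2) ℝ) * X 0 * f n
      + ((n : MvPolynomial (Fin 2) ℝ) + 1) * X 1 * f (n + 1)
      + ((n : MvPolynomial (Fin 2) ℝ) + 2) * f (n + 2) = 0 := by
  have H1 : (n : MvPolynomial (Fin 2) ℝ) * X 0 * f n
      = ∑ i ∈ Finset.range (n/2+1),
          C ((n:ℝ) * co n i) * (X 0 ^ (i+1) * X 1 ^ (n+2-2*(i+1))) := by
    rw [f_eq n ((n/2+1)+1) (by omega), Finset.mul_sum, Finset.sum_range_succ]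
    have hz1 : co n (n/2+1) = 0 := by
      have hlt : n - (n/2+1) < n/2+1 := by omega
      simp [co, Nat.choose_eq_zero_of_lt hlt]
    rw [hz1, map_zero, zero_mul, mul_zero, add_zero]
    apply Finset.sum_congr rfl
    intro i _
    have he : n + 2 - 2*(i+1) = n - 2*i := by omega
    rw [he, map_mul, map_natCast (C : ℝ →+* MvPolynomial (Fin 2) ℝ)]
    ring
  have H2 : ((n : MvPolynomial (Fin 2) ℝ) + 1) * X 1 * f (n + 1)
        + ((n : MvPolynomial (Fin 2) ℝ) + 2) * f (n + 2)
      = ∑ i ∈ Finset.range (n/2+1),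
          C (((n:ℝ)+1) * co (n+1) (i+1) + ((n:ℝ)+2) * co (n+2) (i+1))
            * (X 0 ^ (i+1) * X 1 ^ (n+2-2*(i+1))) := by
    rw [f_eq (n+1) ((n/2+1)+1) (by omega), f_eq (n+2) ((n/2+1)+1) (by omega),
      Finset.mul_sum, Finset.mul_sum, ← Finset.sum_add_distrib, Finset.sum_range_succ']
    have hz0 : ((n : MvPolynomial (Fin 2) ℝ) + 1) * X 1
          * (C (co (n+1) 0) * (X 0 ^ 0 * X 1 ^ (n+1-2*0)))
        + ((n : MvPolynomial (Fin 2) ℝ) + 2)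
          * (C (co (n+2) 0) * (X 0 ^ 0 * X 1 ^ (n+2-2*0))) = 0 := by
      have e : n + 2 - 2*0 = (n+1-2*0) + 1 := by omega
      rw [e]
      have := key0 n hn
      calc ((n : MvPolynomial (Fin 2) ℝ) + 1) * X 1
            * (C (co (n+1) 0) * (X 0 ^ 0 * X 1 ^ (n+1-2*0)))
          + ((n : MvPolynomial (Fin 2) ℝ) + 2)
            * (C (co (n+2) 0) * (X 0 ^ 0 * X 1 ^ ((n+1-2*0)+1)))
          = C (((n:ℝ)+1) * co (n+1) 0 + ((n:ℝ)+2) * co (n+2) 0)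
              * (X 0 ^ 0 * X 1 ^ ((n+1-2*0)+1)) := by
            rw [map_add, map_mul, map_mul, map_add, map_add, map_one,
              map_natCast (C : ℝ →+* MvPolynomial (Fin 2) ℝ),
              map_ofNat (C : ℝ →+* MvPolynomial (Fin 2) ℝ)]
            ring
        _ = 0 := by rw [key0 n hn, map_zero, zero_mul]
    rw [hz0, add_zero]
    apply Finset.sum_congr rfl
    intro i hi
    simp only [Finset.mem_range] at hi
    rw [map_add, map_mul, map_mul, map_add, map_add, map_one,
      map_natCast (C : ℝ →+* MvPolynomial (Fin 2) ℝ),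
      map_ofNat (C : ℝ →+* MvPolynomial (Fin 2) ℝ)]
    by_cases hc : 2*(i+1) ≤ n+1
    · have he : n + 2 - 2*(i+1) = (n+1-2*(i+1)) + 1 := by omega
      rw [he]
      ring
    · have hz : co (n+1) (i+1) = 0 := by
        have hlt : n - i < i+1 := by omega
        simp [co, Nat.succ_sub_succ, Nat.choose_eq_zero_of_lt hlt]
      rw [hz]
      simp only [map_zero, mul_zero, zero_mul, zero_add]
      ring
  rw [add_assoc, H1, H2, ← Finset.sum_add_distrib]
  apply Finset.sum_eq_zero
  intro i hi
  simp only [Finset.mem_range] at hi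
  rw [← add_mul, ← map_add, key n i hn (by omega), map_zero, zero_mul]
end

section
/- For all integers n, k with k ≥ 0 and n ≥ 2k+1, the identity ∑_{i=0}^{k+1} (-1)^i · C(k+1, i) · ∏_{j=i}^{k} ((2n-2j-1)/(2n-2k-2j-1)) = 0 holds in ℚ, where the product is empty (equal to 1) when i = k+1, so that the last term is (-1)^{k+1}. (All denominators 2n-2k-2j-1 are positive odd integers since n ≥ 2k+1.) -/
/-!
With `a j = 2n - 2j - 1`, the `i`-th product is `∏_{j=i}^{k} a j / a (k + j)`. Completing the
numerator and the denominator to products over initial segments, it equals a constant times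
`a i * a (i + 1) * ⋯ * a (i + k - 1)`, a polynomial of degree `k` in `i`, since `a` is affine.
The alternating binomial sum is, up to sign, the `(k + 1)`-st forward difference of that
polynomial at `0`, so it vanishes.
-/

open Finset Polynomial

theorem Polynomial.sum_range_neg_one_pow_mul_choose_mul_eval_eq_zero {R : Type*} [CommRing R]
    {P : R[X]} {N : ℕ} (hP : P.natDegree < N) :
    ∑ i ∈ range (N + 1), (-1 : R) ^ i * N.choose i * P.eval (i : R) = 0 := by
  have h := congr_fun (P.fwdDiff_iter_eq_zero_of_degree_lt hP) 0
  rw [fwdDiff_iter_eq_sum_shift] at h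
  simp only [zero_add, nsmul_eq_mul, mul_one, zsmul_eq_mul, Int.cast_mul, Int.cast_pow,
    Int.cast_neg, Int.cast_one, Int.cast_natCast, Pi.zero_apply] at h
  rw [← mul_zero ((-1 : R) ^ N), ← h, mul_sum]
  refine sum_congr rfl fun i hi => ?_
  obtain ⟨m, rfl⟩ := Nat.exists_eq_add_of_le (mem_range_succ_iff.mp hi)
  have hsign : (-1 : R) ^ (i + m) * (-1) ^ m = (-1) ^ i := by
    rw [pow_add, mul_assoc, ← pow_add, Even.neg_one_pow ⟨m, rfl⟩, mul_one]
  rw [Nat.add_sub_cancel_left, ← hsign]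
  ring

theorem prod_Icc_div_apply_add_eq {K : Type*} [Field K] {a : ℕ → K} (ha : ∀ j, a j ≠ 0)
    {i k : ℕ} (hi : i ≤ k + 1) :
    ∏ j ∈ Icc i k, a j / a (k + j) =
      (∏ j ∈ range (k + 1), a j) / (∏ j ∈ range (2 * k + 1), a j) *
        ∏ t ∈ range k, a (i + t) := by
  have hnum : (∏ j ∈ range i, a j) * ∏ j ∈ Icc i k, a j = ∏ j ∈ range (k + 1), a j := by
    rw [← Ico_add_one_right_eq_Icc, prod_range_mul_prod_Ico _ hi]
  have hden : (∏ j ∈ range (i + k), a j) * ∏ j ∈ Icc i k, a (k + j) =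
      ∏ j ∈ range (2 * k + 1), a j := by
    rw [← Ico_add_one_right_eq_Icc, prod_Ico_add, show 2 * k + 1 = k + 1 + k by ring,
      prod_range_mul_prod_Ico _ (by omega : i + k ≤ k + 1 + k)]
  rw [prod_div_distrib, ← hnum, ← hden, prod_range_add]
  field_simp [prod_ne_zero_iff, ha]

theorem Polynomial.natDegree_prod_range_linear_le {R : Type*} [CommRing R] (α : R) (β : ℕ → R)
    (k : ℕ) : (∏ t ∈ range k, (C α * X + C (β t))).natDegree ≤ k :=
  (natDegree_prod_le _ _).trans <| (sum_le_card_nsmul _ _ 1 fun _ _ => natDegree_linear_le).trans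
    (by simp)

theorem sum_neg_one_pow_mul_choose_mul_prod_affine_div_eq_zero {K : Type*} [Field K] (α β : K)
    (hne : ∀ j : ℕ, α * j + β ≠ 0) (k : ℕ) :
    ∑ i ∈ range (k + 2), (-1 : K) ^ i * (k + 1).choose i *
      ∏ j ∈ Icc i k, (α * j + β) / (α * (k + j : ℕ) + β) = 0 := by
  set P : K[X] := ∏ t ∈ range k, (C α * X + C (α * t + β))
  have hP (i : ℕ) : P.eval (i : K) = ∏ t ∈ range k, (α * (i + t : ℕ) + β) := by
    simp only [P, eval_prod, eval_add, eval_mul, eval_C, eval_X, Nat.cast_add]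
    exact prod_congr rfl fun t _ => by ring
  set c := (∏ j ∈ range (k + 1), (α * j + β)) / ∏ j ∈ range (2 * k + 1), (α * j + β)
  calc _ = ∑ i ∈ range (k + 2), c * ((-1 : K) ^ i * (k + 1).choose i * P.eval (i : K)) := by
        refine sum_congr rfl fun i hi => ?_
        rw [prod_Icc_div_apply_add_eq (a := fun j : ℕ => α * j + β) (k := k) hne
          (mem_range_succ_iff.mp hi), hP]
        ring
    _ = 0 := by
        rw [← mul_sum, sum_range_neg_one_pow_mul_choose_mul_eval_eq_zero
          ((natDegree_prod_range_linear_le _ _ k).trans_lt k.lt_succ_self), mul_zero]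

theorem stmt5_general (n k : ℕ) :
    ∑ i ∈ Finset.range (k + 2),
      (-1 : ℚ) ^ i * (Nat.choose (k + 1) i : ℚ) *
        ∏ j ∈ Finset.Icc i k,
          ((2 * (n : ℚ) - 2 * j - 1) / (2 * (n : ℚ) - 2 * k - 2 * j - 1)) = 0 := by
  have hodd : ∀ j : ℕ, (-2 : ℚ) * j + (2 * n - 1) ≠ 0 := fun j => by
    rw [show (-2 : ℚ) * j + (2 * n - 1) = ((2 * n - 2 * j - 1 : ℤ) : ℚ) by push_cast; ring]
    exact Int.cast_ne_zero.mpr (by omega)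
  convert sum_neg_one_pow_mul_choose_mul_prod_affine_div_eq_zero _ _ hodd k using 4 with i _ j _
  push_cast
  ring

theorem stmt5 (n k : ℕ) (h : 2 * k + 1 ≤ n) :
    ∑ i ∈ Finset.range (k + 2),
      (-1 : ℚ) ^ i * (Nat.choose (k + 1) i : ℚ) *
        ∏ j ∈ Finset.Icc i k,
          ((2 * (n : ℚ) - 2 * j - 1) / (2 * (n : ℚ) - 2 * k - 2 * j - 1)) = 0 :=
  stmt5_general n k
end

section
/- For all integers n, k, i with k ≥ 1, n ≥ 2k+1 and 0 ≤ i ≤ k-1, the identity a_{i-1}^{n-2,k-1} + a_i^{n-1,k-1} · (a_k^{n,k} - a_{k-1}^{n-2,k-1}) = a_i^{n,k} holds in ℚ, where by convention a_{-1}^{n-2,k-1} := 0. -/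
open Finset

/-- The coefficient `a_i^{n,k}` from the unitary kinematic formula recursion:
`a_i^{n,k} = (-2)^{i-k-1} · C(k+1,i) · (∏_{j=i}^k (n-j)) / (∏_{j=i}^k (2n-2k-2j-1))`. -/
noncomputable def a (n k i : ℕ) : ℚ :=
  (-2 : ℚ) ^ ((i : ℤ) - k - 1) * (Nat.choose (k + 1) i : ℚ) *
    (∏ j ∈ Finset.Icc i k, ((n : ℚ) - j)) /
    (∏ j ∈ Finset.Icc i k, (2 * (n : ℚ) - 2 * k - 2 * j - 1))

theorem stmt7 (n k i : ℕ) (hk : 1 ≤ k) (hn : 2 * k + 1 ≤ n) (hi : i ≤ k - 1) :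
    (if i = 0 then 0 else a (n - 2) (k - 1) (i - 1))
      + a (n - 1) (k - 1) i * (a n k k - a (n - 2) (k - 1) (k - 1)) = a n k i := by
  have hik : i < k := by omega
  have hk1 : k - 1 + 1 = k := by omega
  have hN1 : ((n - 1 : ℕ) : ℚ) = (n : ℚ) - 1 := by
    push_cast [Nat.cast_sub (by omega : 1 ≤ n)]; ring
  have hN2 : ((n - 2 : ℕ) : ℚ) = (n : ℚ) - 2 := by
    push_cast [Nat.cast_sub (by omega : 2 ≤ n)]; ring
  have hK1 : ((k - 1 : ℕ) : ℚ) = (k : ℚ) - 1 := by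
    push_cast [Nat.cast_sub hk]; ring
  have hK1' : ((k - 1 : ℕ) : ℤ) = (k : ℤ) - 1 := by
    push_cast [Nat.cast_sub hk]; ring
  set N : ℚ := (n : ℚ) with hN
  set K : ℚ := (k : ℚ) with hKdef
  set Q : ℚ := ∏ j ∈ Finset.Ico (i+1) (k+1), (N - (j:ℚ)) with hQdef
  set E : ℚ := ∏ j ∈ Finset.Ico i k, (2*N - 2*K - 2*(j:ℚ) - 1) with hEdef
  have hNK : 2*K + 1 ≤ N := by rw [hN, hKdef]; exact_mod_cast hn
  have hK1le : (1:ℚ) ≤ K := by rw [hKdef]; exact_mod_cast hk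
  have hEpos : 0 < E := by
    rw [hEdef]
    apply Finset.prod_pos
    intro j hj
    rw [Finset.mem_Ico] at hj
    have : (j:ℚ) ≤ K - 1 := by
      rw [hKdef]; exact_mod_cast by omega
    linarith
  have hwpos : (0:ℚ) < 2*N - 2*K - 2*K - 1 := by linarith
  have hIccIco : Finset.Icc i (k-1) = Finset.Ico i k := by
    rw [← Finset.Ico_add_one_right_eq_Icc, hk1]
  have hP : ∏ j ∈ Finset.Icc i k, (N - (j:ℚ)) = (N - i) * Q := by
    rw [← Finset.Ico_add_one_right_eq_Icc, Finset.prod_eq_prod_Ico_succ_bot (by omega)]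
  have hD : ∏ j ∈ Finset.Icc i k, (2*N - 2*K - 2*(j:ℚ) - 1)
      = E * (2*N - 2*K - 2*K - 1) := by
    rw [← Finset.Ico_add_one_right_eq_Icc, Finset.prod_Ico_succ_top (by omega), hEdef]
  have hQ1 : ∏ j ∈ Finset.Icc i (k-1), (((n-1:ℕ):ℚ) - (j:ℚ)) = Q := by
    rw [hIccIco, hQdef, ← Finset.prod_Ico_add' (fun j : ℕ => (N - (j:ℚ))) i k 1]
    exact Finset.prod_congr rfl fun x _ => by rw [hN1]; push_cast; ring
  have hE1 : ∏ j ∈ Finset.Icc i (k-1),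
      (2*((n-1:ℕ):ℚ) - 2*((k-1:ℕ):ℚ) - 2*(j:ℚ) - 1) = E := by
    rw [hIccIco, hEdef]
    exact Finset.prod_congr rfl fun x _ => by rw [hN1, hK1]; ring
  have hakk : a n k k = (-2:ℚ)^(-1:ℤ) * (K+1) * (N - K) / (2*N - 2*K - 2*K - 1) := by
    rw [a, Finset.Icc_self, Finset.prod_singleton, Finset.prod_singleton,
      Nat.choose_succ_self_right]
    norm_num
    rfl
  have hakk' : a (n-2) (k-1) (k-1)
      = (-2:ℚ)^(-1:ℤ) * K * (N - K - 1) / (2*N - 2*K - 2*K - 1) := by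
    rw [a, Finset.Icc_self, Finset.prod_singleton, Finset.prod_singleton,
      Nat.choose_succ_self_right, hk1, hN2, hK1, hK1']
    rw [show ((k:ℤ) - 1) - ((k:ℤ) - 1) - 1 = -1 from by ring,
      show 2*(N-2) - 2*(K-1) - 2*(K-1) - 1 = 2*N - 2*K - 2*K - 1 from by ring]
    congr 1
    ring
  have hdiff : a n k k - a (n-2) (k-1) (k-1)
      = (-2:ℚ)^(-1:ℤ) * N / (2*N - 2*K - 2*K - 1) := by
    rw [hakk, hakk', div_sub_div_same]
    congr 1
    ring
  have hmid : a (n-1) (k-1) i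
      = (-2:ℚ)^((i:ℤ) - k) * (Nat.choose k i : ℚ) * Q / E := by
    rw [a, hQ1, hE1, hk1, hK1',
      show (i:ℤ) - ((k:ℤ) - 1) - 1 = (i:ℤ) - k from by ring]
  have hrhs : a n k i
      = (-2:ℚ)^((i:ℤ) - k - 1) * (Nat.choose (k+1) i : ℚ) * ((N - i) * Q)
        / (E * (2*N - 2*K - 2*K - 1)) := by
    rw [a, hP, hD]
  have hzp : (-2:ℚ)^((i:ℤ) - k) = (-2:ℚ)^((i:ℤ) - k - 1) * (-2) := by
    rw [← zpow_add_one₀ (by norm_num : (-2:ℚ) ≠ 0)]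
    congr 1
    ring
  have hneg : (-2:ℚ)^(-1:ℤ) = -(1/2) := by norm_num
  rw [hmid, hdiff, hrhs]
  by_cases hi0 : i = 0
  · rw [if_pos hi0]
    have hc : (Nat.choose k i : ℚ) = 1 := by rw [hi0, Nat.choose_zero_right]; norm_num
    have hc' : (Nat.choose (k+1) i : ℚ) = 1 := by rw [hi0, Nat.choose_zero_right]; norm_num
    have hic : (i:ℚ) = 0 := by rw [hi0]; norm_num
    rw [hc, hc', hic, zero_add, div_mul_div_comm,
      div_eq_div_iff (by positivity) (by positivity), hzp, hneg]
    ring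
  · rw [if_neg hi0]
    have hi1' : 1 ≤ i := by omega
    have hI1' : ((i - 1 : ℕ) : ℤ) = (i : ℤ) - 1 := by
      push_cast [Nat.cast_sub hi1']; ring
    have hR : ∏ j ∈ Finset.Icc (i-1) (k-1), (((n-2:ℕ):ℚ) - (j:ℚ))
        = Q * (N - K - 1) := by
      have h1 : Finset.Icc (i-1) (k-1) = Finset.Ico (i-1) k := by
        rw [← Finset.Ico_add_one_right_eq_Icc, hk1]
      rw [h1, hQdef]
      have h2 := Finset.prod_Ico_add' (fun j : ℕ => (N - (j:ℚ))) (i-1) k 2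
      rw [show i - 1 + 2 = i + 1 from by omega] at h2
      calc ∏ j ∈ Finset.Ico (i-1) k, (((n-2:ℕ):ℚ) - (j:ℚ))
          = ∏ j ∈ Finset.Ico (i-1) k, (N - ((j+2:ℕ):ℚ)) :=
            Finset.prod_congr rfl fun x _ => by rw [hN2]; push_cast; ring
        _ = ∏ j ∈ Finset.Ico (i+1) (k+2), (N - (j:ℚ)) := h2
        _ = (∏ j ∈ Finset.Ico (i+1) (k+1), (N - (j:ℚ))) * (N - K - 1) := by
            rw [Finset.prod_Ico_succ_top (by omega : i + 1 ≤ k + 1)]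
            rw [hKdef]; push_cast; ring
    have hF : ∏ j ∈ Finset.Icc (i-1) (k-1),
        (2*((n-2:ℕ):ℚ) - 2*((k-1:ℕ):ℚ) - 2*(j:ℚ) - 1)
        = E * (2*N - 2*K - 2*K - 1) := by
      have h1 : Finset.Icc (i-1) (k-1) = Finset.Ico (i-1) k := by
        rw [← Finset.Ico_add_one_right_eq_Icc, hk1]
      rw [h1]
      have h2 := Finset.prod_Ico_add' (fun j : ℕ => (2*N - 2*K - 2*(j:ℚ) - 1)) (i-1) k 1
      rw [show i - 1 + 1 = i from by omega] at h2
      calc ∏ j ∈ Finset.Ico (i-1) k, (2*((n-2:ℕ):ℚ) - 2*((k-1:ℕ):ℚ) - 2*(j:ℚ) - 1)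
          = ∏ j ∈ Finset.Ico (i-1) k, (2*N - 2*K - 2*((j+1:ℕ):ℚ) - 1) :=
            Finset.prod_congr rfl fun x _ => by rw [hN2, hK1]; push_cast; ring
        _ = ∏ j ∈ Finset.Ico i (k+1), (2*N - 2*K - 2*(j:ℚ) - 1) := h2
        _ = E * (2*N - 2*K - 2*K - 1) := by
            rw [Finset.prod_Ico_succ_top (by omega), hEdef]
    have hfirst : a (n-2) (k-1) (i-1)
        = (-2:ℚ)^((i:ℤ) - k - 1) * (Nat.choose k (i-1) : ℚ) * (Q * (N - K - 1))
          / (E * (2*N - 2*K - 2*K - 1)) := by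
      rw [a, hR, hF, hk1, hK1', hI1',
        show ((i:ℤ) - 1) - ((k:ℤ) - 1) - 1 = (i:ℤ) - k - 1 from by ring]
    rw [hfirst]
    obtain ⟨i', rfl⟩ : ∃ i', i = i' + 1 := ⟨i - 1, by omega⟩
    have pas : (Nat.choose (k+1) (i'+1) : ℚ)
        = (Nat.choose k i' : ℚ) + (Nat.choose k (i'+1) : ℚ) := by
      rw [Nat.choose_succ_succ]; push_cast; ring
    have habs : (Nat.choose k (i'+1) : ℚ) * ((i':ℚ)+1)
        = (Nat.choose k i' : ℚ) * (K - i') := by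
      have h := congrArg (fun m : ℕ => (m:ℚ)) (Nat.choose_succ_right_eq k i')
      have hle : i' ≤ k := by omega
      push_cast [Nat.cast_sub hle] at h
      rw [hKdef]
      linarith [h]
    simp only [Nat.add_sub_cancel]
    have hic : ((i'+1:ℕ):ℚ) = (i':ℚ) + 1 := by push_cast; ring
    rw [div_mul_div_comm, ← add_div,
      div_eq_div_iff (by positivity) (by positivity), hzp, hneg, hic]
    linear_combination ((-2:ℚ)^(((i'+1:ℕ):ℤ) - k - 1) * Q * (E * (2*N - 2*K - 2*K - 1)))
      * (habs - (N - ((i':ℚ)+1)) * pas)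
end

section
/- For every even integer n ≥ 2, setting k := n/2 - 1, the identity ∑_{i=0}^{n/2} a_i^{n,k} · s^i · t^{n+1-2i} = (-1)^{n/2} · f_{n+1} holds in ℝ[s,t]. -/
open MvPolynomial Finset

lemma prod1 (m d : ℕ) (hm : 1 ≤ m) (hd : d ≤ m) :
    ∏ j ∈ Icc (m-d) (m-1), (2*(m:ℚ) - j) = (Nat.factorial (m+d)) / (Nat.factorial m) := by
  induction d with
  | zero =>
    rw [Nat.sub_zero, show Icc m (m-1) = ∅ by rw [Finset.Icc_eq_empty_iff]; omega,
      Finset.prod_empty, Nat.add_zero]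
    field_simp
  | succ d ih =>
    have h2 : m - (d+1) ≤ m - 1 := by omega
    rw [show Icc (m-(d+1)) (m-1) = insert (m-(d+1)) (Ioc (m-(d+1)) (m-1)) from
      (Finset.Ioc_insert_left h2).symm, Finset.prod_insert (by simp),
      ← Finset.Icc_add_one_left_eq_Ioc, show (m-(d+1)) + 1 = m - d by omega, ih (by omega)]
    have hc : ((m - (d+1) : ℕ) : ℚ) = (m:ℚ) - (d+1) := by
      push_cast [Nat.cast_sub (by omega : d+1 ≤ m)]; ring
    have hfac : ((Nat.factorial (m+(d+1)) : ℕ) : ℚ) = ((m:ℚ)+d+1) * (Nat.factorial (m+d)) := by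
      rw [show m+(d+1) = (m+d)+1 by omega, Nat.factorial_succ]; push_cast; ring
    have hne : ((Nat.factorial m : ℚ)) ≠ 0 := by positivity
    rw [hc, hfac, mul_div_assoc]
    congr 1
    ring

lemma prod2 (m d : ℕ) (hm : 1 ≤ m) (hd : d ≤ m) :
    ∏ j ∈ Icc (m-d) (m-1), (2*(m:ℚ) + 1 - 2*j) =
      (Nat.factorial (2*d+1)) / (2^d * Nat.factorial d) := by
  induction d with
  | zero =>
    rw [Nat.sub_zero, show Icc m (m-1) = ∅ by rw [Finset.Icc_eq_empty_iff]; omega,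
      Finset.prod_empty]
    norm_num [Nat.factorial]
  | succ d ih =>
    have h2 : m - (d+1) ≤ m - 1 := by omega
    rw [show Icc (m-(d+1)) (m-1) = insert (m-(d+1)) (Ioc (m-(d+1)) (m-1)) from
      (Finset.Ioc_insert_left h2).symm, Finset.prod_insert (by simp),
      ← Finset.Icc_add_one_left_eq_Ioc, show (m-(d+1)) + 1 = m - d by omega, ih (by omega)]
    have hc : ((m - (d+1) : ℕ) : ℚ) = (m:ℚ) - (d+1) := by
      push_cast [Nat.cast_sub (by omega : d+1 ≤ m)]; ring
    have hfac : ((Nat.factorial (2*(d+1)+1) : ℕ) : ℚ)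
        = (2*(d:ℚ)+3) * (2*(d:ℚ)+2) * (Nat.factorial (2*d+1)) := by
      rw [show 2*(d+1)+1 = ((2*d+1)+1)+1 by omega, Nat.factorial_succ, Nat.factorial_succ]
      push_cast; ring
    have hne : ((Nat.factorial d : ℚ)) ≠ 0 := by positivity
    have hne2 : (2:ℚ)^d ≠ 0 := by positivity
    have hne3 : ((Nat.factorial (2*d+1) : ℚ)) ≠ 0 := by positivity
    rw [hc, hfac, show Nat.factorial (d+1) = (d+1) * Nat.factorial d from Nat.factorial_succ d]
    push_cast
    field_simp
    ring

lemma keyA (m i : ℕ) (hm : 1 ≤ m) (hi : i ≤ m) :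
    a (2*m) (m-1) i = (-1:ℚ)^(m+i) * (Nat.factorial (2*m-i)) /
      ((Nat.factorial i) * (Nat.factorial (2*m+1-2*i))) := by
  have hp1 := prod1 m (m-i) hm (by omega)
  have hp2 := prod2 m (m-i) hm (by omega)
  rw [show m - (m-i) = i by omega] at hp1 hp2
  rw [show m + (m-i) = 2*m - i by omega] at hp1
  rw [show 2*(m-i)+1 = 2*m+1-2*i by omega] at hp2
  unfold a
  rw [show ((i:ℤ) - ((m-1:ℕ):ℤ) - 1) = -((m-i : ℕ):ℤ) by omega,
    zpow_neg, zpow_natCast, show m-1+1 = m by omega,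
    Nat.cast_choose ℚ hi]
  have e1 : ∏ j ∈ Icc i (m-1), (((2*m : ℕ):ℚ) - j) = ∏ j ∈ Icc i (m-1), (2*(m:ℚ) - j) := by
    apply Finset.prod_congr rfl; intro j _; push_cast; ring
  have e2 : ∏ j ∈ Icc i (m-1), (2 * ((2*m : ℕ):ℚ) - 2 * ((m-1:ℕ):ℚ) - 2 * j - 1)
      = ∏ j ∈ Icc i (m-1), (2*(m:ℚ) + 1 - 2*j) := by
    apply Finset.prod_congr rfl; intro j _
    push_cast [Nat.cast_sub hm]; ring
  rw [e1, e2, hp1, hp2]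
  have hsign : (-1:ℚ)^(m+i) = (-1:ℚ)^(m-i) := by
    rw [show m+i = (m-i)+2*i by omega, pow_add, pow_mul]; norm_num
  have hneg2 : (-2:ℚ)^(m-i) = (-1:ℚ)^(m-i) * 2^(m-i) := by
    rw [← neg_one_mul, mul_pow]
  rw [hsign, hneg2]
  have n1 : ((Nat.factorial m : ℚ)) ≠ 0 := by positivity
  have n2 : ((Nat.factorial i : ℚ)) ≠ 0 := by positivity
  have n3 : ((Nat.factorial (m-i) : ℚ)) ≠ 0 := by positivity
  have n4 : ((Nat.factorial (2*m-i) : ℚ)) ≠ 0 := by positivity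
  have n5 : ((Nat.factorial (2*m+1-2*i) : ℚ)) ≠ 0 := by positivity
  have n6 : (2:ℚ)^(m-i) ≠ 0 := by positivity
  have n7 : (-1:ℚ)^(m-i) ≠ 0 := by
    intro h; simpa using congrArg (|·|) h
  field_simp
  ring_nf
  rw [pow_mul, ← pow_mul', pow_mul]
  norm_num

lemma keyB (m i : ℕ) (hm : 1 ≤ m) (hi : i ≤ m) :
    (a (2*m) (m-1) i : ℝ)
      = (-1:ℝ)^m * (((-1:ℝ)^i / (((2*m+1 : ℕ):ℝ) - i)) * (Nat.choose (2*m+1-i) i)) := by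
  rw [keyA m i hm hi]
  rw [Nat.cast_choose ℝ (show i ≤ 2*m+1-i by omega),
    show (2*m+1-i)-i = 2*m+1-2*i by omega,
    show 2*m+1-i = (2*m-i)+1 by omega, Nat.factorial_succ]
  have hc : ((2*m+1 : ℕ):ℝ) - i = ((2*m-i : ℕ):ℝ) + 1 := by
    push_cast [Nat.cast_sub (show i ≤ 2*m by omega)]; ring
  rw [hc]
  have n0 : ((2*m-i : ℕ):ℝ) + 1 ≠ 0 := by positivity
  have n2 : ((Nat.factorial i : ℝ)) ≠ 0 := by positivity
  have n4 : ((Nat.factorial (2*m-i) : ℝ)) ≠ 0 := by positivity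
  have n5 : ((Nat.factorial (2*m+1-2*i) : ℝ)) ≠ 0 := by positivity
  push_cast
  rw [pow_add]
  field_simp

theorem stmt11 (n : ℕ) (hn : 2 ≤ n) (he : Even n) :
    ∑ i ∈ Finset.range (n / 2 + 1),
      ((a n (n / 2 - 1) i : ℝ)) • (X 0 ^ i * X 1 ^ (n + 1 - 2 * i))
      = (-1 : ℝ) ^ (n / 2) • f (n + 1) := by
  obtain ⟨m, rfl⟩ := he
  have hm : 1 ≤ m := by omega
  rw [show m + m = 2*m from (two_mul m).symm]
  rw [show (2*m)/2 = m from by omega]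
  rw [f, show (2*m+1)/2 = m from by omega,
    show (-1:ℝ)^(2*m+1+1) = 1 from by
      rw [show 2*m+1+1 = 2*(m+1) by ring, pow_mul]; norm_num,
    one_smul, Finset.smul_sum]
  apply Finset.sum_congr rfl
  intro i hi
  have hi' : i ≤ m := by simpa [Nat.lt_succ_iff] using hi
  rw [smul_smul, keyB m i hm hi']
end

section
/- For every odd integer n ≥ 1, setting k := (n-1)/2, the identity ∑_{i=0}^{(n+1)/2} a_i^{n,k} · s^i · t^{n+1-2i} = (-1)^{(n-1)/2} · ((n+1)/2) · f_{n+1} holds in ℝ[s,t]. -/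
open MvPolynomial Finset

lemma nat_binom (k i : ℕ) (h : i ≤ k) :
    Nat.choose (2*k+1-i) (i+1) * (i+1) * (2*k+2-i)
      = Nat.choose (2*k+2-i) i * (2*k+2-2*i) * (2*k+1-2*i) := by
  have h1 : Nat.choose (2*k+1-i) (i+1) * (i+1) = Nat.choose (2*k+1-i) i * (2*k+1-i - i) :=
    Nat.choose_succ_right_eq _ _
  have h2 : Nat.choose (2*k+1-i) i * (2*k+1-i + 1) = Nat.choose (2*k+1-i+1) i * (2*k+1-i + 1 - i) :=
    Nat.choose_mul_succ_eq _ _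
  have e1 : 2*k+1-i-i = 2*k+1-2*i := by omega
  have e2 : 2*k+1-i+1 = 2*k+2-i := by omega
  have e4 : 2*k+2-i-i = 2*k+2-2*i := by omega
  rw [e1] at h1
  rw [e2, e4] at h2
  calc Nat.choose (2*k+1-i) (i+1) * (i+1) * (2*k+2-i)
      = Nat.choose (2*k+1-i) i * (2*k+2-i) * (2*k+1-2*i) := by rw [h1]; ring
    _ = Nat.choose (2*k+2-i) i * (2*k+2-2*i) * (2*k+1-2*i) := by rw [h2]

lemma qkey (k : ℕ) : ∀ m i, i + m = k + 1 →
    (Nat.choose (k+1) i : ℚ) * (∏ j ∈ Finset.Icc i k, (2*(k:ℚ)+1 - j)) * (2*(k:ℚ)+2-i)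
      = ((k:ℚ)+1) * (Nat.choose (2*k+2-i) i : ℚ) * 2^(k+1-i) *
          (∏ j ∈ Finset.Icc i k, (2*(k:ℚ)+1-2*j)) := by
  intro m
  induction m with
  | zero =>
    intro i hi
    have hik : i = k + 1 := by omega
    subst hik
    rw [Finset.Icc_eq_empty (by omega)]
    have e1 : 2*k+2-(k+1) = k+1 := by omega
    have e2 : k+1-(k+1) = 0 := by omega
    rw [e1, e2]
    simp
    push_cast
    ring
  | succ m ih =>
    intro i hi
    have hik : i ≤ k := by omega
    have IH := ih (i+1) (by omega)
    have hIcc : Finset.Icc i k = insert i (Finset.Icc (i+1) k) := by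
      rw [← Finset.Ioc_insert_left hik, Finset.Icc_add_one_left_eq_Ioc]
    have hnm : i ∉ Finset.Icc (i+1) k := by simp
    rw [hIcc, Finset.prod_insert hnm, Finset.prod_insert hnm]
    have epow : k+1-i = (k-i)+1 := by omega
    rw [epow, pow_succ]
    have epow2 : k+1-(i+1) = k-i := by omega
    rw [epow2] at IH
    -- choose relation A
    have hA : (Nat.choose (k+1) (i+1) : ℚ) * ((i:ℚ)+1) = (Nat.choose (k+1) i : ℚ) * ((k:ℚ)+1-i) := by
      have h := Nat.choose_succ_right_eq (k+1) i
      have hc : ((k+1-i : ℕ) : ℚ) = (k:ℚ)+1-i := by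
        rw [Nat.cast_sub (by omega)]; push_cast; ring
      have h' := congrArg (Nat.cast : ℕ → ℚ) h
      push_cast at h'
      rw [hc] at h'
      exact_mod_cast h'
    -- choose relation B
    have hB : (Nat.choose (2*k+1-i) (i+1) : ℚ) * ((i:ℚ)+1) * (2*(k:ℚ)+2-i)
        = (Nat.choose (2*k+2-i) i : ℚ) * (2*(k:ℚ)+2-2*i) * (2*(k:ℚ)+1-2*i) := by
      have h := congrArg (Nat.cast : ℕ → ℚ) (nat_binom k i hik)
      push_cast at h
      have c1 : ((2*k+2-i : ℕ) : ℚ) = 2*(k:ℚ)+2-i := by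
        rw [Nat.cast_sub (by omega)]; push_cast; ring
      have c2 : ((2*k+2-2*i : ℕ) : ℚ) = 2*(k:ℚ)+2-2*i := by
        rw [Nat.cast_sub (by omega)]; push_cast; ring
      have c3 : ((2*k+1-2*i : ℕ) : ℚ) = 2*(k:ℚ)+1-2*i := by
        rw [Nat.cast_sub (by omega)]; push_cast; ring
      rw [c1, c2, c3] at h
      exact h
    -- IH uses Nat.choose (2*k+2-(i+1)) (i+1) = Nat.choose (2*k+1-i) (i+1)
    have eB : 2*k+2-(i+1) = 2*k+1-i := by omega
    rw [eB] at IH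
    have hy : ((k:ℚ)+1-(i:ℚ)) ≠ 0 := by
      have : (i:ℚ) ≤ k := by exact_mod_cast hik
      intro h0; linarith [this]
    apply mul_right_cancel₀ hy
    push_cast at IH ⊢
    linear_combination (-((2*(k:ℚ)+1-i) * (∏ j ∈ Finset.Icc (i+1) k, (2*(k:ℚ)+1 - j)) * (2*(k:ℚ)+2-i))) * hA
      + (((i:ℚ)+1) * (2*(k:ℚ)+2-i)) * IH
      + (((k:ℚ)+1) * (2:ℚ)^(k-i) * (∏ j ∈ Finset.Icc (i+1) k, (2*(k:ℚ)+1-2*j))) * hB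

lemma key_s12 (k i : ℕ) (h : i ≤ k + 1) :
    a (2*k+1) k i = (-1:ℚ)^(k+1+i) * ((k:ℚ)+1) * (Nat.choose (2*k+2-i) i : ℚ) / (2*(k:ℚ)+2-i) := by
  rw [a]
  have hP : (∏ j ∈ Finset.Icc i k, (((2*k+1:ℕ):ℚ) - j)) = ∏ j ∈ Finset.Icc i k, (2*(k:ℚ)+1 - j) :=
    Finset.prod_congr rfl (fun j _ => by push_cast; ring)
  have hQ : (∏ j ∈ Finset.Icc i k, (2*((2*k+1:ℕ):ℚ) - 2*k - 2*j - 1))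
      = ∏ j ∈ Finset.Icc i k, (2*(k:ℚ)+1 - 2*j) :=
    Finset.prod_congr rfl (fun j _ => by push_cast; ring)
  rw [hP, hQ]
  have hzpow : (-2:ℚ) ^ ((i:ℤ) - k - 1) = (-1:ℚ)^(k+1+i) / 2^(k+1-i) := by
    have e : (i:ℤ) - k - 1 = -((k+1-i : ℕ) : ℤ) := by
      rw [Nat.cast_sub (by omega)]; push_cast; ring
    rw [e, zpow_neg, zpow_natCast]
    rw [neg_pow]
    have e2 : k+1+i = (k+1-i) + 2*i := by omega
    rw [e2, pow_add, pow_mul, neg_one_sq, one_pow, mul_one]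
    rw [mul_inv, div_eq_mul_inv]
    congr 1
    rcases Nat.even_or_odd (k+1-i) with he | ho
    · rw [he.neg_one_pow]; norm_num
    · rw [ho.neg_one_pow]; norm_num
  rw [hzpow]
  have hq := qkey k (k+1-i) i (by omega)
  have hQ0 : (∏ j ∈ Finset.Icc i k, (2*(k:ℚ)+1 - 2*j)) ≠ 0 := by
    apply Finset.prod_ne_zero_iff.mpr
    intro j hj
    simp only [Finset.mem_Icc] at hj
    have : (j:ℚ) ≤ k := by exact_mod_cast hj.2
    intro h0; linarith
  have hv : (2*(k:ℚ)+2-(i:ℚ)) ≠ 0 := by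
    have : (i:ℚ) ≤ k+1 := by exact_mod_cast h
    intro h0; linarith
  have h2p : ((2:ℚ)^(k+1-i)) ≠ 0 := by positivity
  field_simp
  rw [eq_div_iff (by intro h0; apply hv; linarith)]
  linear_combination hq

theorem stmt12 (n : ℕ) (hn : 1 ≤ n) (ho : Odd n) :
    ∑ i ∈ Finset.range ((n + 1) / 2 + 1),
      ((a n ((n - 1) / 2) i : ℝ)) • (X 0 ^ i * X 1 ^ (n + 1 - 2 * i))
      = ((-1 : ℝ) ^ ((n - 1) / 2) * (((n : ℝ) + 1) / 2)) • f (n + 1) := by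
  obtain ⟨k, rfl⟩ : ∃ k, n = 2*k+1 := by
    obtain ⟨j, hj⟩ := ho; exact ⟨j, by omega⟩
  have e1 : (2*k+1-1)/2 = k := by omega
  have e2 : (2*k+1+1)/2 = k+1 := by omega
  rw [e1, e2, f]
  have e3 : (2*k+1+1)/2 = k+1 := by omega
  have e4 : 2*k+1+1 = 2*k+2 := by omega
  rw [e4]
  have e5 : (2*k+2)/2 = k+1 := by omega
  rw [e5]
  rw [smul_smul, Finset.smul_sum]
  apply Finset.sum_congr rfl
  intro i hi
  simp only [Finset.mem_range] at hi
  have hik : i ≤ k + 1 := by omega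
  rw [smul_smul]
  have eexp : 2*k+2 - 2*i = 2*k+2 - 2*i := rfl
  congr 1
  · -- scalar equality
    have hkey := key_s12 k i hik
    have : ((a (2*k+1) k i : ℚ) : ℝ)
        = (-1:ℝ)^(k+1+i) * ((k:ℝ)+1) * (Nat.choose (2*k+2-i) i : ℝ) / (2*(k:ℝ)+2-i) := by
      rw [hkey]; push_cast; ring
    rw [this]
    have hodd : (-1:ℝ)^(2*k+2+1) = -1 := Odd.neg_one_pow ⟨k+1, by ring⟩
    rw [hodd]
    have hv : (((2*k+2:ℕ)):ℝ) - (i:ℝ) ≠ 0 := by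
      have : (i:ℝ) ≤ 2*k+2 := by exact_mod_cast (by omega : i ≤ 2*k+2)
      have h2 : (i:ℝ) < 2*k+2 := by
        have : (i:ℝ) ≤ k+1 := by exact_mod_cast hik
        push_cast; linarith
      push_cast; intro h0; linarith
    have hv' : (2*(k:ℝ)+2-(i:ℝ)) ≠ 0 := by push_cast at hv; convert hv using 2
    push_cast
    field_simp
    ring
end

section
/- For every integer n ≥ 1, the ideal of ℝ[s,t] generated by f_{n+1} and f_{n+2} is contained in the ideal generated by f_n and f_{n+1}. (Consequently the quotient maps ℝ[s,t]/(f_{n+1}, f_{n+2}) → ℝ[s,t]/(f_n, f_{n+1}) are well defined, corresponding to restriction of valuations from ℂ^n to ℂ^{n-1}.) -/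
open MvPolynomial Finset

lemma coeffid (k j : ℕ) (hk : 1 ≤ k) (hj : 2*j ≤ k) :
    ((k:ℝ)+2) * (Nat.choose (k+1-j) (j+1)) / ((k:ℝ)+1-j)
      = ((k:ℝ)+1) * (Nat.choose (k-j) (j+1)) / ((k:ℝ)-j)
        + (k:ℝ) * (Nat.choose (k-j) j) / ((k:ℝ)-j) := by
  have hjk : j < k := by omega
  have hjr : (j:ℝ) < k := by exact_mod_cast hjk
  have h1 : (k:ℝ) - j ≠ 0 := by linarith
  have h2 : (k:ℝ)+1-j ≠ 0 := by linarith
  have hP : (Nat.choose (k+1-j) (j+1) : ℝ)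
      = Nat.choose (k-j) (j+1) + Nat.choose (k-j) j := by
    have h : k+1-j = (k-j)+1 := by omega
    rw [h, Nat.choose_succ_succ']
    push_cast; ring
  have hR : ((j:ℝ)+1) * Nat.choose (k-j) (j+1) = ((k:ℝ)-2*j) * Nat.choose (k-j) j := by
    have h := Nat.choose_succ_right_eq (k-j) j
    have hc : ((k - j - j : ℕ) : ℝ) = (k:ℝ) - 2*j := by
      have h3 : k - j - j = k - 2*j := by omega
      rw [h3, Nat.cast_sub hj]; push_cast; ring
    have h4 : (Nat.choose (k-j) (j+1) : ℝ) * ((j:ℝ)+1)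
        = (Nat.choose (k-j) j : ℝ) * ((k - j - j : ℕ) : ℝ) := by exact_mod_cast h
    rw [hc] at h4; linarith
  rw [← add_div, div_eq_div_iff h2 h1, hP]
  linear_combination -hR

lemma f_ext (m N : ℕ) (hN : m/2+1 ≤ N) :
    f m = (-1 : ℝ) ^ (m + 1) • ∑ i ∈ Finset.range N,
      (((-1 : ℝ) ^ i / ((m : ℝ) - i)) * (Nat.choose (m - i) i)) •
        (X 0 ^ i * X 1 ^ (m - 2 * i)) := by
  unfold f
  congr 1
  refine Finset.sum_subset (Finset.range_subset_range.mpr hN) ?_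
  intro i _ hni
  have h1 : m/2 < i := by simpa using hni
  have h2 : m - i < i := by omega
  simp [Nat.choose_eq_zero_of_lt h2]

lemma frec (k : ℕ) (hk : 1 ≤ k) :
    ((k:ℝ)+2) • f (k+2) + ((k:ℝ)+1) • (X 1 * f (k+1)) + (k:ℝ) • (X 0 * f k) = 0 := by
  rw [f_ext (k+2) (k/2+2) (by omega), f_ext (k+1) (k/2+2) (by omega)]
  unfold f
  simp only [Finset.smul_sum, Finset.mul_sum, smul_smul, mul_smul_comm]
  rw [← Finset.sum_add_distrib]
  rw [show k/2+2 = (k/2+1)+1 from rfl, Finset.sum_range_succ']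
  rw [add_right_comm, ← Finset.sum_add_distrib]
  have key : ∀ (a b : MvPolynomial (Fin 2) ℝ), a = 0 → b = 0 → a + b = 0 := by
    intros a b ha hb; simp [ha, hb]
  apply key
  · refine Finset.sum_eq_zero fun j hj => ?_
    have h2j : 2*j ≤ k := by have := Finset.mem_range.mp hj; omega
    have hjk : j < k := by omega
    have hd1 : (k:ℝ) - j ≠ 0 := by
      have : (j:ℝ) < k := by exact_mod_cast hjk
      linarith
    have hd2 : (k:ℝ) + 1 - j ≠ 0 := by
      have : (j:ℝ) < k := by exact_mod_cast hjk
      linarith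
    have hid := coeffid k j hk h2j
    have he1 : k + 2 - 2*(j+1) = k - 2*j := by omega
    have hc1 : k + 2 - (j+1) = k + 1 - j := by omega
    have hc2 : k + 1 - (j+1) = k - j := by omega
    have hm3 : (X 0 : MvPolynomial (Fin 2) ℝ) * (X 0 ^ j * X 1 ^ (k - 2*j))
        = X 0 ^ (j+1) * X 1 ^ (k - 2*j) := by rw [pow_succ]; ring
    rw [he1, hc1, hc2, hm3]
    by_cases hodd : 2*j + 1 ≤ k
    · have he2 : (k + 1 - 2*(j+1)) + 1 = k - 2*j := by omega
      have hm2 : (X 1 : MvPolynomial (Fin 2) ℝ) * (X 0 ^ (j+1) * X 1 ^ (k+1-2*(j+1)))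
          = X 0 ^ (j+1) * X 1 ^ (k - 2*j) := by rw [← he2, pow_succ]; ring
      rw [hm2, ← add_smul, ← add_smul]
      convert zero_smul ℝ _
      push_cast
      linear_combination ((-1:ℝ)^k * (-1:ℝ)^j) * hid
    · have hz : Nat.choose (k - j) (j+1) = 0 := by
        apply Nat.choose_eq_zero_of_lt; omega
      rw [hz] at hid ⊢
      simp only [Nat.cast_zero, mul_zero, zero_mul, zero_div, mul_zero, zero_smul, add_zero, zero_add]
      rw [← add_smul]
      convert zero_smul ℝ _
      push_cast
      linear_combination ((-1:ℝ)^k * (-1:ℝ)^j) * hid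
  · have h1 : ((k:ℝ)+1) ≠ 0 := by positivity
    have h2 : ((k:ℝ)+2) ≠ 0 := by positivity
    simp only [pow_zero, Nat.sub_zero, Nat.cast_zero, sub_zero, one_mul,
      Nat.choose_zero_right, Nat.cast_one, mul_one, Nat.mul_zero]
    rw [show (X 1 : MvPolynomial (Fin 2) ℝ) * X 1 ^ (k+1) = X 1 ^ (k+2) from by
      rw [pow_succ]; ring]
    rw [← add_smul]
    convert zero_smul ℝ _
    push_cast
    field_simp
    ring

theorem stmt13 (n : ℕ) (hn : 1 ≤ n) :
    Ideal.span {f (n + 1), f (n + 2)} ≤ Ideal.span {f n, f (n + 1)} := by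
  rw [Ideal.span_le]
  rintro p (rfl | rfl)
  · exact Ideal.subset_span (by simp)
  · -- show f (n+2) ∈ span
    have hne : ((n:ℝ)+2) ≠ 0 := by positivity
    have h := frec n hn
    have hf : f (n+2) = ((n:ℝ)+2)⁻¹ • (-(((n:ℝ)+1) • (X 1 * f (n+1))) - (n:ℝ) • (X 0 * f n)) := by
      have h2 : ((n:ℝ)+2) • f (n+2)
          = -(((n:ℝ)+1) • (X 1 * f (n+1))) - (n:ℝ) • (X 0 * f n) := by
        linear_combination (norm := module) h
      rw [← h2, inv_smul_smul₀ hne]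
    rw [hf]
    have hmem1 : f n ∈ Ideal.span {f n, f (n+1)} := Ideal.subset_span (by simp)
    have hmem2 : f (n+1) ∈ Ideal.span {f n, f (n+1)} := Ideal.subset_span (by simp)
    have hs : ∀ (r : ℝ) (p : MvPolynomial (Fin 2) ℝ), p ∈ Ideal.span {f n, f (n+1)} →
        r • p ∈ Ideal.span {f n, f (n+1)} := by
      intro r p hp
      rw [smul_eq_C_mul]
      exact Ideal.mul_mem_left _ _ hp
    apply hs
    apply Ideal.sub_mem
    · exact neg_mem (hs _ _ (Ideal.mul_mem_left _ _ hmem2))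
    · exact hs _ _ (Ideal.mul_mem_left _ _ hmem1)
end

section
/- For every integer n ≥ 1, the polynomials f_{n+1} and f_{n+2} are relatively prime in ℝ[s,t]: every polynomial dividing both f_{n+1} and f_{n+2} is a nonzero constant (a unit of ℝ[s,t]). -/
open MvPolynomial Finset

/-! Auxiliary: Lucas-type polynomials `LP k`, equal to `(-1)^(k+1) * k • f k`. -/

noncomputable def LP : ℕ → MvPolynomial (Fin 2) ℝ
  | 0 => 2
  | 1 => X 1
  | (k+2) => X 1 * LP (k+1) - X 0 * LP k

noncomputable def φ : MvPolynomial (Fin 2) ℝ →ₐ[ℝ] Polynomial ℝ :=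
  aeval ![0, Polynomial.X]

lemma φ_LP (k : ℕ) : φ (LP (k+1)) = Polynomial.X ^ (k+1) := by
  induction k using Nat.strong_induction_on with
  | _ k ih =>
    match k with
    | 0 => simp [LP, φ]
    | (k+1) =>
      rw [show k+1+1 = k+2 from rfl, LP, map_sub, map_mul, map_mul, ih k (by omega)]
      simp [φ]
      ring

lemma LP_ne_zero (k : ℕ) : LP (k+1) ≠ 0 := by
  intro h
  have := φ_LP k
  rw [h, map_zero] at this
  exact pow_ne_zero _ Polynomial.X_ne_zero this.symm

lemma primeX0 : Prime (X 0 : MvPolynomial (Fin 2) ℝ) := by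
  have h := MulEquiv.prime_iff (MvPolynomial.finSuccEquiv ℝ 1).toMulEquiv
    (p := (X 0 : MvPolynomial (Fin 2) ℝ))
  rw [← h]
  have : (MvPolynomial.finSuccEquiv ℝ 1).toMulEquiv (X 0 : MvPolynomial (Fin 2) ℝ)
      = Polynomial.X := by
    simpa using MvPolynomial.finSuccEquiv_X_zero (R := ℝ) (n := 1)
  rw [this]
  exact Polynomial.prime_X

lemma X0_not_dvd (k : ℕ) : ¬ (X 0 : MvPolynomial (Fin 2) ℝ) ∣ LP (k+1) := by
  intro h
  have := map_dvd φ h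
  rw [φ_LP] at this
  have h0 : φ (X 0) = 0 := by simp [φ]
  rw [h0] at this
  exact pow_ne_zero _ Polynomial.X_ne_zero (zero_dvd_iff.mp this)

lemma X0_of_unit {p e : MvPolynomial (Fin 2) ℝ} (he : X 0 = p * e) (hu : IsUnit e) :
    X 0 ∣ p := by
  obtain ⟨u, rfl⟩ := hu
  exact Dvd.intro _ (by rw [he, mul_assoc, Units.mul_inv, mul_one])

lemma main_descent : ∀ n, 1 ≤ n → ∀ d : MvPolynomial (Fin 2) ℝ,
    d ∣ LP n → d ∣ LP (n+1) → IsUnit d := by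
  intro n hn
  induction n, hn using Nat.le_induction with
  | base =>
    intro d h1 h2
    have hLP2 : LP 2 = X 1 * X 1 - X 0 * 2 := by rw [LP]; rfl
    have h1' : d ∣ X 1 := h1
    have hd2 : d ∣ X 0 * 2 := by
      have h : (X 0 : MvPolynomial (Fin 2) ℝ) * 2 = X 1 * X 1 - LP 2 := by rw [hLP2]; ring
      rw [h]
      exact dvd_sub (h1'.mul_left _) h2
    have hdX0 : d ∣ X 0 := by
      have h : (X 0 : MvPolynomial (Fin 2) ℝ) = (X 0 * 2) * C (1/2) := by
        rw [mul_assoc, show (2 : MvPolynomial (Fin 2) ℝ) = C 2 from (map_ofNat C 2).symm,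
          ← map_mul]
        norm_num
      rw [h]
      exact hd2.mul_right _
    obtain ⟨e, he⟩ := hdX0
    rcases primeX0.irreducible.isUnit_or_isUnit he with hu | hu
    · exact hu
    · exact absurd ((X0_of_unit he hu).trans h1') (X0_not_dvd 0)
  | succ n hn ih =>
    intro d h1 h2
    have hrec : LP (n+2) = X 1 * LP (n+1) - X 0 * LP n := by rw [LP]
    have hdvd : d ∣ X 0 * LP n := by
      have h : (X 0 : MvPolynomial (Fin 2) ℝ) * LP n = X 1 * LP (n+1) - LP (n+2) := by
        rw [hrec]; ring
      rw [h]
      exact dvd_sub (h1.mul_left _) h2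
    by_contra hdu
    have hd0 : d ≠ 0 := by
      rintro rfl
      exact LP_ne_zero n (zero_dvd_iff.mp h1)
    obtain ⟨p, hpirr, hpd⟩ := WfDvdMonoid.exists_irreducible_factor hdu hd0
    have hp : Prime p := (UniqueFactorizationMonoid.irreducible_iff_prime).mp hpirr
    rcases hp.2.2 _ _ (hpd.trans hdvd) with hps | hpn
    · obtain ⟨e, he⟩ := hps
      rcases primeX0.irreducible.isUnit_or_isUnit he with hu | hu
      · exact hp.not_unit hu
      · exact absurd ((X0_of_unit he hu).trans (hpd.trans h1)) (X0_not_dvd n)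
    · exact hp.not_unit (ih p hpn (hpd.trans h1))

/-! Coefficients. -/

noncomputable def fc (k i : ℕ) : ℝ := (-1:ℝ)^i * k / ((k:ℝ) - i) * ((k - i).choose i)

noncomputable def fm (k i : ℕ) : MvPolynomial (Fin 2) ℝ := X 0 ^ i * X 1 ^ (k - 2*i)

noncomputable def fg (k : ℕ) : MvPolynomial (Fin 2) ℝ :=
  ∑ i ∈ Finset.range (k/2 + 1), fc k i • fm k i

lemma keyid (n j : ℕ) (hn : 1 ≤ n) (hj : j ≤ n) :
    ((n:ℝ)+j+2)/((n:ℝ)+1) * ((n+1).choose (j+1)) =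
      ((n:ℝ)+j+1)/n * (n.choose (j+1)) + ((n:ℝ)+j)/n * (n.choose j) := by
  have h1 : ((n+1).choose (j+1) : ℝ) = n.choose j + n.choose (j+1) := by
    rw [Nat.choose_succ_succ]; push_cast; ring
  have h2 : (n.choose (j+1) : ℝ) * (j+1) = n.choose j * ((n:ℝ) - j) := by
    have hcast := congrArg (fun x : ℕ => (x:ℝ)) (Nat.choose_succ_right_eq n j)
    push_cast [hj] at hcast
    linarith [hcast]
  have hn0 : (n:ℝ) ≠ 0 := by positivity
  have hn1 : (n:ℝ) + 1 ≠ 0 := by positivity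
  field_simp
  linear_combination ((n:ℝ)+j+2)*(n:ℝ)*h1 - h2

lemma fc_eq_zero {k i : ℕ} (h : k < 2*i) : fc k i = 0 := by
  have : k - i < i := by omega
  rw [fc, Nat.choose_eq_zero_of_lt this]
  simp

lemma fc_zero (k : ℕ) (hk : 1 ≤ k) : fc k 0 = 1 := by
  have h0 : (k:ℝ) ≠ 0 := by positivity
  simp [fc, div_self h0]

lemma coeffid_s14 (k i : ℕ) (hk : 1 ≤ k) (hi : 1 ≤ i) :
    fc (k+2) i = fc (k+1) i - fc k (i-1) := by
  by_cases hc : 2*i ≤ k+2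
  · obtain ⟨j, rfl⟩ : ∃ j, i = j + 1 := ⟨i - 1, by omega⟩
    set n := k - j with hn
    have hkn : k = n + j := by omega
    have hn1 : 1 ≤ n := by omega
    have hjn : j ≤ n := by omega
    have e1 : k + 2 - (j+1) = n + 1 := by omega
    have e2 : k + 1 - (j+1) = n := by omega
    have key := keyid n j hn1 hjn
    rw [fc, fc, fc]
    simp only [Nat.add_sub_cancel]
    rw [e1, e2, ← hn]
    push_cast
    rw [show (k:ℝ) = (n:ℝ) + j from by rw [hkn]; push_cast; ring]
    linear_combination ((-1:ℝ)^(j+1)) * key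
  · have h1 : fc (k+2) i = 0 := fc_eq_zero (by omega)
    have h2 : fc (k+1) i = 0 := fc_eq_zero (by omega)
    have h3 : fc k (i-1) = 0 := fc_eq_zero (by omega)
    rw [h1, h2, h3]; ring

lemma fg_ext (k N : ℕ) (hN : k/2 + 1 ≤ N) :
    fg k = ∑ i ∈ Finset.range N, fc k i • fm k i := by
  refine Finset.sum_subset (Finset.range_subset_range.mpr hN) ?_
  intro i hi hni
  rw [Finset.mem_range] at hi hni
  rw [fc_eq_zero (by omega), zero_smul]

lemma fg_rec (k : ℕ) (hk : 1 ≤ k) : fg (k+2) = X 1 * fg (k+1) - X 0 * fg k := by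
  rw [fg_ext (k+2) (k+3) (by omega), fg_ext (k+1) (k+3) (by omega),
      fg_ext k (k+2) (by omega), Finset.mul_sum, Finset.mul_sum]
  have hA : ∀ i ∈ Finset.range (k+3),
      X 1 * (fc (k+1) i • fm (k+1) i) = fc (k+1) i • fm (k+2) i := by
    intro i _
    by_cases h : 2*i ≤ k+1
    · rw [mul_smul_comm]
      congr 1
      rw [fm, fm, show k+2-2*i = (k+1-2*i)+1 from by omega, pow_succ]
      ring
    · rw [fc_eq_zero (by omega)]; simp
  have hB : ∀ i ∈ Finset.range (k+2),
      X 0 * (fc k i • fm k i) = fc k i • fm (k+2) (i+1) := by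
    intro i _
    by_cases h : 2*i ≤ k
    · rw [mul_smul_comm]
      congr 1
      rw [fm, fm, show k+2-2*(i+1) = k-2*i from by omega, pow_succ]
      ring
    · rw [fc_eq_zero (by omega)]; simp
  rw [Finset.sum_congr rfl hA, Finset.sum_congr rfl hB, eq_sub_iff_add_eq,
      Finset.sum_range_succ' (fun i => fc (k+2) i • fm (k+2) i) (k+2),
      Finset.sum_range_succ' (fun i => fc (k+1) i • fm (k+2) i) (k+2),
      add_right_comm, ← Finset.sum_add_distrib]
  congr 1
  · refine Finset.sum_congr rfl ?_
    intro i _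
    rw [← add_smul]
    congr 1
    have := coeffid_s14 k (i+1) hk (by omega)
    simp only [Nat.add_sub_cancel] at this
    linarith [this]
  · rw [fc_zero (k+2) (by omega), fc_zero (k+1) (by omega)]

lemma LP_eq_fg (k : ℕ) : LP (k+1) = fg (k+1) := by
  induction k using Nat.strong_induction_on with
  | _ k ih =>
    match k with
    | 0 =>
      show LP 1 = fg 1
      rw [show LP 1 = X 1 from rfl, fg]
      norm_num [fc, fm]
    | 1 =>
      show LP 2 = fg 2
      have hlp : LP 2 = X 1 * X 1 - X 0 * 2 := by rw [LP]; rfl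
      rw [hlp, fg, show (2:ℕ)/2 + 1 = 2 from rfl, Finset.sum_range_succ,
        Finset.sum_range_one]
      norm_num [fc, fm, smul_eq_C_mul]
      rw [show (2 : MvPolynomial (Fin 2) ℝ) = C 2 from (map_ofNat C 2).symm]
      ring
    | (k+2) =>
      rw [show k+2+1 = (k+1)+2 from rfl, LP, fg_rec (k+1) (by omega),
          ih (k+1) (by omega), ih k (by omega)]

lemma LP_eq_f (k : ℕ) (hk : 1 ≤ k) : LP k = ((-1:ℝ)^(k+1) * k) • f k := by
  obtain ⟨k', rfl⟩ : ∃ k', k = k' + 1 := ⟨k - 1, by omega⟩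
  rw [LP_eq_fg, f, smul_smul, fg]
  rw [show (-1:ℝ)^(k'+1+1) * (((k'+1:ℕ)):ℝ) * (-1:ℝ)^(k'+1+1) = (((k'+1:ℕ)):ℝ) from by
    have ha : (-1:ℝ)^(k'+1+1) * (-1:ℝ)^(k'+1+1) = 1 := by
      rw [← pow_add]; exact Even.neg_one_pow ⟨k'+2, by ring⟩
    push_cast
    linear_combination ((k':ℝ)+1) * ha]
  rw [Finset.smul_sum]
  refine Finset.sum_congr rfl ?_
  intro i _
  rw [smul_smul, fc, fm]
  congr 1
  push_cast
  ring

theorem stmt14 (n : ℕ) (hn : 1 ≤ n) (d : MvPolynomial (Fin 2) ℝ)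
    (h1 : d ∣ f (n + 1)) (h2 : d ∣ f (n + 2)) : IsUnit d := by
  have hd1 : d ∣ LP (n+1) := by
    rw [LP_eq_f (n+1) (by omega), smul_eq_C_mul]
    exact h1.mul_left _
  have hd2 : d ∣ LP (n+2) := by
    rw [LP_eq_f (n+2) (by omega), smul_eq_C_mul]
    exact h2.mul_left _
  exact main_descent (n+1) (by omega) d hd1 hd2
end

section
/- For every integer n ≥ 1, the quotient ring ℝ[s,t]/(f_{n+1}, f_{n+2}) is a finite-dimensional ℝ-vector space of dimension (n+1)(n+2)/2. (This is the total dimension of the algebra of U(n)-invariant translation-invariant continuous convex valuations on ℂ^n.) -/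
open MvPolynomial Finset

noncomputable section

abbrev R2 := MvPolynomial (Fin 2) ℝ

/-- coefficients of Lucas-type polynomials -/
def γ (k i : ℕ) : ℕ := if i = 0 then 1 else (k - i).choose i + (k - i - 1).choose (i - 1)

lemma gamma_zero (k : ℕ) : γ k 0 = 1 := rfl

lemma gamma_rec (k j : ℕ) (hj : 2 * j ≤ k) :
    γ (k + 2) (j + 1) = γ (k + 1) (j + 1) + γ k j := by
  rcases j with _ | j
  · simp [γ, Nat.choose_one_right]
  · obtain ⟨r, hr⟩ : ∃ r, k = 2 * j + 2 + r := ⟨k - (2 * j + 2), by omega⟩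
    subst hr
    simp only [γ, Nat.add_sub_cancel, if_neg (Nat.succ_ne_zero _)]
    rw [show 2 * j + 2 + r + 2 - (j + 1 + 1) = (j + r) + 2 by omega,
      show (j + r) + 2 - 1 = (j + r) + 1 by omega,
      show 2 * j + 2 + r + 1 - (j + 1 + 1) = (j + r) + 1 by omega,
      show (j + r) + 1 - 1 = j + r by omega,
      show 2 * j + 2 + r - (j + 1) = (j + r) + 1 by omega,
      show (j + r) + 1 - 1 = j + r by omega,
      Nat.choose_succ_succ ((j+r)+1) (j+1), Nat.choose_succ_succ (j+r) j]
    simp only [Nat.succ_eq_add_one]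
    omega

lemma gamma_vanish (k i : ℕ) (h2 : 2 ≤ i) (h : k < 2 * i) : γ k i = 0 := by
  obtain ⟨j, rfl⟩ : ∃ j, i = j + 2 := ⟨i - 2, by omega⟩
  simp only [γ, if_neg (Nat.succ_ne_zero _), Nat.add_sub_cancel]
  rw [Nat.choose_eq_zero_of_lt (by omega), Nat.choose_eq_zero_of_lt (by omega)]

lemma gamma_mul (k i : ℕ) (hi : 2 * i ≤ k) (hk : 1 ≤ k) :
    (k - i) * γ k i = k * (k - i).choose i := by
  rcases i with _ | j
  · simp [γ]
  · have hki : 1 ≤ k - (j+1) := by omega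
    obtain ⟨m, hm⟩ : ∃ m, k - (j + 1) = m + 1 := ⟨k - (j+1) - 1, by omega⟩
    simp only [γ, if_neg (Nat.succ_ne_zero _), Nat.add_sub_cancel, hm]
    have habs : (m + 1) * m.choose j = (m+1).choose (j+1) * (j+1) := Nat.add_one_mul_choose_eq m j
    have hmk : k = (m + 1) + (j + 1) := by omega
    subst hmk
    nlinarith [habs]

/-- monomial s^a t^b -/
def Mon (a b : ℕ) : R2 := X 0 ^ a * X 1 ^ b

/-- Lucas-type polynomials: twice the Newton power sums in disguise -/
def P : ℕ → R2
  | 0 => C 2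
  | 1 => X 1
  | (k+2) => X 1 * P (k+1) - X 0 * P k

def cc (k i : ℕ) : ℝ := (-1 : ℝ) ^ i * γ k i

def E (k : ℕ) : R2 := ∑ i ∈ Finset.range (k / 2 + 1), cc k i • Mon i (k - 2 * i)

lemma E_sum (k N : ℕ) (hk : 2 ≤ k) (h : k / 2 + 1 ≤ N) :
    E k = ∑ i ∈ Finset.range N, cc k i • Mon i (k - 2 * i) := by
  rw [E, Finset.sum_subset (Finset.range_subset_range.2 h)]
  intro i _ hi
  rw [Finset.mem_range, not_lt] at hi
  have : γ k i = 0 := gamma_vanish k i (by omega) (by omega)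
  simp [cc, this]

lemma E_rec (k : ℕ) (hk : 1 ≤ k) : E (k + 2) = X 1 * E (k + 1) - X 0 * E k := by
  have hdiv : (k + 2) / 2 + 1 = k / 2 + 2 := by omega
  -- RHS first summand
  have h1 : X 1 * E (k + 1) = ∑ i ∈ Finset.range (k / 2 + 2), cc (k+1) i • Mon i (k + 2 - 2 * i) := by
    rw [E_sum (k+1) (k/2 + 2) (by omega) (by omega), Finset.mul_sum]
    apply Finset.sum_congr rfl
    intro i hi
    rw [Finset.mem_range] at hi
    rw [mul_smul_comm]
    rcases le_or_gt (2 * i) (k + 1) with h' | h'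
    · congr 1
      rw [Mon, Mon, show k + 2 - 2*i = (k + 1 - 2*i) + 1 by omega]
      ring
    · -- coefficient vanishes
      have h2 : 2 ≤ i := by omega
      rw [cc, gamma_vanish (k+1) i h2 (by omega)]
      simp
  -- RHS second summand
  have h2 : X 0 * E k = ∑ i ∈ Finset.range (k / 2 + 2),
      (if i = 0 then (0:R2) else cc k (i-1) • Mon i (k + 2 - 2 * i)) := by
    rw [Finset.sum_range_succ' _ (k/2+1)]
    norm_num
    rw [E, Finset.mul_sum]
    apply Finset.sum_congr rfl
    intro i hi
    rw [Finset.mem_range] at hi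
    rw [mul_smul_comm]
    congr 1
    rw [Mon, Mon, show k + 2 - 2*(i+1) = k - 2*i by omega, pow_succ]
    ring
  rw [h1, h2, ← Finset.sum_sub_distrib, E, hdiv]
  apply Finset.sum_congr rfl
  intro i hi
  rw [Finset.mem_range] at hi
  rcases i with _ | j
  · simp [cc, γ]
  · rw [if_neg (Nat.succ_ne_zero _), Nat.add_sub_cancel, ← sub_smul]
    congr 1
    have hrec := gamma_rec k j (by omega)
    rw [cc, cc, cc, hrec]
    push_cast
    ring

lemma P_eq_E : ∀ k : ℕ, P (k+1) = E (k+1)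
  | 0 => by
    rw [P, E]
    norm_num [cc, γ, Mon]
  | 1 => by
    rw [show (1:ℕ)+1 = 2 from rfl, P, P, P, E]
    rw [show (2:ℕ)/2 + 1 = 2 from rfl, Finset.sum_range_succ, Finset.sum_range_one]
    simp [cc, γ, Mon, smul_eq_C_mul]
    ring
  | (k+2) => by
    rw [show k+2+1 = (k+1)+2 from rfl, P, P_eq_E k, P_eq_E (k+1),
      show (k+1)+2 = (k+1)+2 from rfl, E_rec (k+1) (by omega)]

lemma P_eq_smul_f (k : ℕ) (hk : 1 ≤ k) :
    P k = (((-1 : ℝ)) ^ (k+1) * k) • f k := by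
  rw [show P k = E k by
    obtain ⟨m, rfl⟩ : ∃ m, k = m + 1 := ⟨k - 1, by omega⟩
    exact P_eq_E m]
  rw [f, smul_smul, E, Finset.smul_sum]
  apply Finset.sum_congr rfl
  intro i hi
  rw [Finset.mem_range] at hi
  have h2i : 2 * i ≤ k := by omega
  have hik : i < k := by omega
  rw [smul_smul, Mon]
  congr 1
  have hcast : ((k : ℝ) - i) = ((k - i : ℕ) : ℝ) := by
    rw [Nat.cast_sub hik.le]
  have hne : ((k - i : ℕ) : ℝ) ≠ 0 := by
    have : 0 < k - i := by omega
    positivity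
  have hmul : (((k - i : ℕ) : ℝ)) * (γ k i : ℝ) = (k : ℝ) * ((k - i).choose i : ℝ) := by
    exact_mod_cast congrArg (Nat.cast : ℕ → ℝ) (gamma_mul k i h2i hk)
  have hsq : ((-1 : ℝ)) ^ (k+1) * ((-1 : ℝ)) ^ (k+1) = 1 := by
    rw [← pow_add]
    exact Even.neg_one_pow ⟨k+1, rfl⟩
  rw [cc, hcast]
  have hγ : (γ k i : ℝ) = (k : ℝ) * (((k - i).choose i : ℕ) : ℝ) * (((k - i : ℕ) : ℝ))⁻¹ := by
    rw [eq_mul_inv_iff_mul_eq₀ hne]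
    linear_combination hmul
  rw [hγ]
  linear_combination (-((-1:ℝ)^i * (k:ℝ) * (((k - i).choose i : ℕ) : ℝ) * (((k - i : ℕ) : ℝ))⁻¹)) * hsq

lemma smul_mem_ideal (c : ℝ) {x : R2} {I : Ideal R2} (h : x ∈ I) : c • x ∈ I := by
  rw [smul_eq_C_mul]; exact I.mul_mem_left _ h

lemma span_f_eq_span_P (n : ℕ) :
    Ideal.span {f (n+1), f (n+2)} = Ideal.span {P (n+1), P (n+2)} := by
  have key : ∀ k : ℕ, 1 ≤ k → ∃ c : ℝ, c ≠ 0 ∧ P k = c • f k := by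
    intro k hk
    refine ⟨((-1 : ℝ)) ^ (k+1) * k, ?_, P_eq_smul_f k hk⟩
    apply mul_ne_zero
    · exact pow_ne_zero _ (by norm_num)
    · exact Nat.cast_ne_zero.2 (by omega)
  obtain ⟨c1, hc1, hP1⟩ := key (n+1) (by omega)
  obtain ⟨c2, hc2, hP2⟩ := key (n+2) (by omega)
  apply le_antisymm
  · rw [Ideal.span_le, Set.insert_subset_iff, Set.singleton_subset_iff]
    constructor
    · have : f (n+1) = c1⁻¹ • P (n+1) := by
        rw [hP1, smul_smul, inv_mul_cancel₀ hc1, one_smul]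
      rw [this]
      exact smul_mem_ideal _ (Ideal.subset_span (by simp))
    · have : f (n+2) = c2⁻¹ • P (n+2) := by
        rw [hP2, smul_smul, inv_mul_cancel₀ hc2, one_smul]
      rw [this]
      exact smul_mem_ideal _ (Ideal.subset_span (by simp))
  · rw [Ideal.span_le, Set.insert_subset_iff, Set.singleton_subset_iff]
    exact ⟨hP1 ▸ smul_mem_ideal _ (Ideal.subset_span (by simp)),
           hP2 ▸ smul_mem_ideal _ (Ideal.subset_span (by simp))⟩

/-- weighted degree: s has weight 2, t has weight 1 -/
def wd (d : Fin 2 →₀ ℕ) : ℕ := 2 * d 0 + d 1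

lemma wd_add (a b : Fin 2 →₀ ℕ) : wd (a + b) = wd a + wd b := by
  simp only [wd, Finsupp.add_apply]
  ring

/-- polynomials all of whose monomials have weighted degree < m -/
def Vm (m : ℕ) : Submodule ℝ R2 where
  carrier := {g | ∀ d ∈ g.support, wd d < m}
  add_mem' := by
    intro a b ha hb d hd
    rcases Finset.mem_union.1 (MvPolynomial.support_add hd) with h | h
    · exact ha d h
    · exact hb d h
  zero_mem' := by simp
  smul_mem' := by
    intro c a ha d hd
    exact ha d (MvPolynomial.support_smul hd)

lemma mem_Vm {m : ℕ} {g : R2} : g ∈ Vm m ↔ ∀ d ∈ g.support, wd d < m := Iff.rfl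

lemma P_hom : ∀ k : ℕ, ∀ d ∈ (P k).support, wd d = k
  | 0 => by
    intro d hd
    rw [P, show (C 2 : R2) = monomial 0 2 from (MvPolynomial.C_apply ..), support_monomial] at hd
    norm_num at hd
    simp [hd, wd]
  | 1 => by
    intro d hd
    rw [P, support_X] at hd
    simp only [Finset.mem_singleton] at hd
    subst hd
    simp [wd, Finsupp.single_apply]
  | (k+2) => by
    intro d hd
    rw [P] at hd
    rcases Finset.mem_union.1 (MvPolynomial.support_sub _ _ _ hd) with h | h
    · obtain ⟨d1, hd1, d2, hd2, rfl⟩ := Finset.mem_add.1 (MvPolynomial.support_mul _ _ h)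
      rw [support_X, Finset.mem_singleton] at hd1
      subst hd1
      rw [wd_add, P_hom (k+1) d2 hd2]
      simp only [wd, Finsupp.single_apply]
      norm_num
      omega
    · obtain ⟨d1, hd1, d2, hd2, rfl⟩ := Finset.mem_add.1 (MvPolynomial.support_mul _ _ h)
      rw [support_X, Finset.mem_singleton] at hd1
      subst hd1
      rw [wd_add, P_hom k d2 hd2]
      simp only [wd, Finsupp.single_apply]
      norm_num
      omega

/-- truncation to weighted degree < m -/
def trunc (m : ℕ) (A : R2) : R2 :=
  ∑ d ∈ A.support.filter (fun d => wd d < m), monomial d (coeff d A)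

lemma coeff_trunc (m : ℕ) (A : R2) (d : Fin 2 →₀ ℕ) :
    coeff d (trunc m A) = if wd d < m then coeff d A else 0 := by
  rw [trunc, MvPolynomial.coeff_sum]
  simp only [coeff_monomial]
  rw [Finset.sum_ite_eq' (A.support.filter (fun d => wd d < m)) d (fun d => coeff d A)]
  simp only [Finset.mem_filter, mem_support_iff]
  split_ifs with h1 h2 h3
  · rfl
  · exact absurd h1.2 h2
  · rcases eq_or_ne (coeff d A) 0 with h | h
    · exact h.symm
    · exact absurd ⟨h, h3⟩ h1
  · rfl

lemma trunc_mem_Vm (m : ℕ) (A : R2) : trunc m A ∈ Vm m := by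
  intro d hd
  rw [mem_support_iff, coeff_trunc] at hd
  by_contra h
  rw [if_neg h] at hd
  exact hd rfl

lemma sub_trunc_wd (m : ℕ) (A : R2) : ∀ d ∈ (A - trunc m A).support, m ≤ wd d := by
  intro d hd
  rw [mem_support_iff, MvPolynomial.coeff_sub, coeff_trunc] at hd
  by_contra h
  rw [not_le] at h
  rw [if_pos h, sub_self] at hd
  exact hd rfl

lemma mul_wd_lower {u v : R2} {a b : ℕ} (hu : ∀ d ∈ u.support, a ≤ wd d)
    (hv : ∀ d ∈ v.support, wd d = b) : ∀ d ∈ (u * v).support, a + b ≤ wd d := by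
  intro d hd
  obtain ⟨d1, hd1, d2, hd2, rfl⟩ := Finset.mem_add.1 (MvPolynomial.support_mul _ _ hd)
  rw [wd_add, hv d2 hd2]
  have := hu d1 hd1
  omega

lemma mul_wd_upper {u v : R2} {m b : ℕ} (hu : u ∈ Vm m)
    (hv : ∀ d ∈ v.support, wd d = b) : u * v ∈ Vm (m + b) := by
  intro d hd
  obtain ⟨d1, hd1, d2, hd2, rfl⟩ := Finset.mem_add.1 (MvPolynomial.support_mul _ _ hd)
  rw [wd_add, hv d2 hd2]
  have := hu d1 hd1
  omega

def Ip (n : ℕ) : Ideal R2 := Ideal.span {P (n+1), P (n+2)}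

lemma P_shift_mem (n : ℕ) : ∀ j : ℕ, P (n+1+j) ∈ Ip n
  | 0 => Ideal.subset_span (by simp)
  | 1 => Ideal.subset_span (by simp [show n+1+1 = n+2 from rfl])
  | (j+2) => by
    rw [show n+1+(j+2) = (n+1+j)+2 from rfl, P]
    exact sub_mem
      (Ideal.mul_mem_left _ _ (by have := P_shift_mem n (j+1); rwa [show n+1+(j+1) = n+1+j+1 from rfl] at this))
      (Ideal.mul_mem_left _ _ (P_shift_mem n j))

lemma X0_pow_P_mem (n : ℕ) : ∀ m j : ℕ, m + j = n + 1 →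
    (X 0 ^ m * P j ∈ Ip n ∧ X 0 ^ m * P (j+1) ∈ Ip n) := by
  intro m
  induction m with
  | zero =>
    intro j hj
    have : j = n + 1 := by omega
    subst this
    constructor
    · simpa [Ip] using Ideal.subset_span (show P (n+1) ∈ ({P (n+1), P (n+2)} : Set R2) by simp)
    · simpa [Ip] using Ideal.subset_span (show P (n+2) ∈ ({P (n+1), P (n+2)} : Set R2) by simp)
  | succ m ih =>
    intro j hj
    obtain ⟨h1, h2⟩ := ih (j+1) (by omega)
    have hrec : X 0 * P j = X 1 * P (j+1) - P (j+2) := by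
      rw [P]; ring
    constructor
    · have heq : X 0 ^ (m+1) * P j = X 1 * (X 0 ^ m * P (j+1)) - X 0 ^ m * P (j+2) := by
        rw [pow_succ]
        linear_combination (X 0 ^ m) * hrec
      rw [heq]
      exact sub_mem (Ideal.mul_mem_left _ _ h1) h2
    · have heq : X 0 ^ (m+1) * P (j+1) = X 0 * (X 0 ^ m * P (j+1)) := by
        rw [pow_succ]; ring
      rw [heq]
      exact Ideal.mul_mem_left _ _ h1

lemma keyMem (n a b : ℕ) (h : n + 1 ≤ a + b) : X 0 ^ a * P b ∈ Ip n := by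
  rcases le_or_gt (n+1) b with hb | hb
  · obtain ⟨j, rfl⟩ : ∃ j, b = n + 1 + j := ⟨b - (n+1), by omega⟩
    exact Ideal.mul_mem_left _ _ (P_shift_mem n j)
  · have h1 := (X0_pow_P_mem n (n+1-b) b (by omega)).1
    have heq : X 0 ^ a * P b = X 0 ^ (a - (n+1-b)) * (X 0 ^ (n+1-b) * P b) := by
      rw [← mul_assoc, ← pow_add]
      congr 2
      omega
    rw [heq]
    exact Ideal.mul_mem_left _ _ h1

def LowSpan (N : ℕ) : Submodule ℝ R2 :=
  Submodule.span ℝ {x | ∃ a b : ℕ, a + b ≤ N ∧ x = Mon a b}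

lemma LowSpan_mono {M N : ℕ} (h : M ≤ N) : LowSpan M ≤ LowSpan N := by
  apply Submodule.span_mono
  rintro x ⟨a, b, hab, rfl⟩
  exact ⟨a, b, hab.trans h, rfl⟩

lemma mul_X_LowSpan (i : Fin 2) (N : ℕ) {g : R2} (hg : g ∈ LowSpan N) :
    X i * g ∈ LowSpan (N + 1) := by
  have h0 : ∀ a b : ℕ, X (0 : Fin 2) * Mon a b = Mon (a+1) b := by
    intro a b; rw [Mon, Mon, pow_succ]; ring
  have h1 : ∀ a b : ℕ, X (1 : Fin 2) * Mon a b = Mon a (b+1) := by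
    intro a b; rw [Mon, Mon, pow_succ]; ring
  refine Submodule.span_induction (p := fun x _ => X i * x ∈ LowSpan (N+1)) ?_ ?_ ?_ ?_ hg
  · rintro x ⟨a, b, hab, rfl⟩
    apply Submodule.subset_span
    fin_cases i
    · exact ⟨a+1, b, by omega, h0 a b⟩
    · exact ⟨a, b+1, by omega, h1 a b⟩
  · show X i * 0 ∈ LowSpan (N+1)
    rw [mul_zero]; exact zero_mem _
  · intro x y _ _ hx hy
    show X i * (x + y) ∈ LowSpan (N+1)
    rw [mul_add]; exact add_mem hx hy
  · intro c x _ hx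
    show X i * (c • x) ∈ LowSpan (N+1)
    rw [mul_smul_comm]; exact Submodule.smul_mem _ _ hx

lemma Pstruct : ∀ j : ℕ, P (j+1) - X 1 ^ (j+1) ∈ LowSpan j
  | 0 => by
    have : P (0+1) - X 1 ^ (0+1) = 0 := by
      rw [P, pow_one, sub_self]
    rw [this]
    exact (LowSpan 0).zero_mem
  | 1 => by
    have heq : P (1+1) - X 1 ^ (1+1) = (-2 : ℝ) • Mon 1 0 := by
      show P (0+2) - X 1 ^ (1+1) = _
      rw [P]
      simp [P, Mon, smul_eq_C_mul, map_neg]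
      ring
    rw [heq]
    exact Submodule.smul_mem _ _ (Submodule.subset_span ⟨1, 0, by omega, rfl⟩)
  | (j+2) => by
    have heq : P ((j+2)+1) - X 1 ^ ((j+2)+1) =
        X 1 * (P (j+2) - X 1 ^ (j+2)) - X 0 * (P (j+1) - X 1 ^ (j+1)) - Mon 1 (j+1) := by
      rw [show (j+2)+1 = (j+1)+2 from rfl, P, Mon]
      ring
    rw [heq]
    exact sub_mem
      (sub_mem (mul_X_LowSpan 1 (j+1) (Pstruct (j+1)))
        (LowSpan_mono (by omega) (mul_X_LowSpan 0 j (Pstruct j))))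
      (Submodule.subset_span ⟨1, j+1, by omega, rfl⟩)

lemma mul_X0pow_LowSpan (i : ℕ) {N : ℕ} {g : R2} (hg : g ∈ LowSpan N) :
    X 0 ^ i * g ∈ LowSpan (N + i) := by
  induction i with
  | zero => simpa using hg
  | succ i ih =>
    have : X 0 ^ (i+1) * g = X 0 * (X 0 ^ i * g) := by rw [pow_succ]; ring
    rw [this, show N + (i+1) = (N + i) + 1 from rfl]
    exact mul_X_LowSpan 0 (N+i) ih

def genSet (n : ℕ) : Set (R2 ⧸ Ip n) :=
  (fun p : ℕ × ℕ => Ideal.Quotient.mkₐ ℝ (Ip n) (Mon p.1 p.2)) '' {p | p.1 + p.2 ≤ n}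

lemma Mon_monomial (a b : ℕ) :
    Mon a b = monomial (Finsupp.single 0 a + Finsupp.single 1 b) (1:ℝ) := by
  rw [Mon, X_pow_eq_monomial, X_pow_eq_monomial, monomial_mul, one_mul]

lemma fin2_decomp (d : Fin 2 →₀ ℕ) :
    d = Finsupp.single 0 (d 0) + Finsupp.single 1 (d 1) := by
  ext i
  fin_cases i <;> simp [Finsupp.single_apply]

lemma mkA_LowSpan {n N : ℕ} (ih : ∀ i j : ℕ, i + j ≤ N →
      Ideal.Quotient.mkₐ ℝ (Ip n) (Mon i j) ∈ Submodule.span ℝ (genSet n))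
    {g : R2} (hg : g ∈ LowSpan N) :
    Ideal.Quotient.mkₐ ℝ (Ip n) g ∈ Submodule.span ℝ (genSet n) := by
  refine Submodule.span_induction
    (p := fun x _ => Ideal.Quotient.mkₐ ℝ (Ip n) x ∈ Submodule.span ℝ (genSet n))
    ?_ ?_ ?_ ?_ hg
  · rintro x ⟨a, b, hab, rfl⟩
    exact ih a b hab
  · show Ideal.Quotient.mkₐ ℝ (Ip n) 0 ∈ _
    rw [map_zero]; exact zero_mem _
  · intro x y _ _ hx hy
    show Ideal.Quotient.mkₐ ℝ (Ip n) (x + y) ∈ _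
    rw [map_add]; exact add_mem hx hy
  · intro c x _ hx
    show Ideal.Quotient.mkₐ ℝ (Ip n) (c • x) ∈ _
    rw [map_smul]; exact Submodule.smul_mem _ _ hx

lemma mon_span (n : ℕ) : ∀ N : ℕ, ∀ i j : ℕ, i + j ≤ N →
    Ideal.Quotient.mkₐ ℝ (Ip n) (Mon i j) ∈ Submodule.span ℝ (genSet n) := by
  intro N
  induction N with
  | zero =>
    intro i j h
    exact Submodule.subset_span ⟨(i, j), by simp; omega, rfl⟩
  | succ N ih =>
    intro i j hij
    rcases le_or_gt (i + j) n with hn' | hn'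
    · exact Submodule.subset_span ⟨(i, j), hn', rfl⟩
    rcases Nat.eq_zero_or_pos j with rfl | hj
    · -- j = 0 : the monomial itself lies in the ideal
      have h2 := keyMem n i 0 (by omega)
      have hmon : Mon i 0 = (2⁻¹ : ℝ) • (X 0 ^ i * P 0) := by
        rw [P, Mon, smul_eq_C_mul, pow_zero, mul_one, mul_comm (X 0 ^ i) (C 2),
          ← mul_assoc, ← C_mul]
        norm_num
      have : Ideal.Quotient.mkₐ ℝ (Ip n) (Mon i 0) = 0 := by
        rw [Ideal.Quotient.mkₐ_eq_mk, Ideal.Quotient.eq_zero_iff_mem, hmon]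
        exact smul_mem_ideal _ h2
      rw [this]; exact zero_mem _
    · obtain ⟨j', rfl⟩ : ∃ j', j = j' + 1 := ⟨j - 1, by omega⟩
      have hkey : X 0 ^ i * P (j'+1) ∈ Ip n := keyMem n i (j'+1) (by omega)
      have hq : Ideal.Quotient.mkₐ ℝ (Ip n) (Mon i (j'+1)) =
          Ideal.Quotient.mkₐ ℝ (Ip n) (Mon i (j'+1) - X 0 ^ i * P (j'+1)) := by
        rw [Ideal.Quotient.mkₐ_eq_mk, Ideal.Quotient.eq]
        simpa using hkey
      have hdiff : Mon i (j'+1) - X 0 ^ i * P (j'+1) =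
          -(X 0 ^ i * (P (j'+1) - X 1 ^ (j'+1))) := by
        rw [Mon]; ring
      have hlow : X 0 ^ i * (P (j'+1) - X 1 ^ (j'+1)) ∈ LowSpan N := by
        have := mul_X0pow_LowSpan i (Pstruct j')
        exact LowSpan_mono (by omega) this
      rw [hq, hdiff, map_neg]
      exact neg_mem (mkA_LowSpan ih hlow)

lemma genSet_span_top (n : ℕ) : Submodule.span ℝ (genSet n) = ⊤ := by
  rw [Submodule.eq_top_iff']
  intro x
  obtain ⟨g, rfl⟩ := Ideal.Quotient.mkₐ_surjective ℝ (Ip n) x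
  rw [← MvPolynomial.support_sum_monomial_coeff g, map_sum]
  apply Submodule.sum_mem
  intro d _
  have hm : (monomial d (coeff d g) : R2) = (coeff d g) • Mon (d 0) (d 1) := by
    rw [Mon_monomial, ← fin2_decomp, smul_monomial, smul_eq_mul, mul_one]
  rw [hm, map_smul]
  exact Submodule.smul_mem _ _ (mon_span n (d 0 + d 1) (d 0) (d 1) le_rfl)

lemma Vm_mono {M N : ℕ} (h : M ≤ N) : Vm M ≤ Vm N := by
  intro g hg d hd
  exact lt_of_lt_of_le (hg d hd) h

lemma trunc_decomp (n : ℕ) (hn : 1 ≤ n) {g : R2} (hg : g ∈ Ip n) (hV : g ∈ Vm (2*n+1)) :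
    ∃ A B : R2, A ∈ Vm n ∧ B ∈ Vm (n-1) ∧ g = A * P (n+1) + B * P (n+2) := by
  obtain ⟨A, B, hAB⟩ := Ideal.mem_span_pair.1 hg
  refine ⟨trunc n A, trunc (n-1) B, trunc_mem_Vm _ _, trunc_mem_Vm _ _, ?_⟩
  have hp := P_hom (n+1)
  have hq := P_hom (n+2)
  have key : (A - trunc n A) * P (n+1) + (B - trunc (n-1) B) * P (n+2) =
      g - (trunc n A * P (n+1) + trunc (n-1) B * P (n+2)) := by
    linear_combination hAB
  have hupper : g - (trunc n A * P (n+1) + trunc (n-1) B * P (n+2)) ∈ Vm (2*n+1) := by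
    refine sub_mem hV (add_mem ?_ ?_)
    · exact Vm_mono (by omega) (mul_wd_upper (trunc_mem_Vm n A) hp)
    · exact Vm_mono (by omega) (mul_wd_upper (trunc_mem_Vm (n-1) B) hq)
  have hzero : g - (trunc n A * P (n+1) + trunc (n-1) B * P (n+2)) = 0 := by
    by_contra h0
    obtain ⟨d, hd⟩ := MvPolynomial.support_nonempty.2 h0
    have h1 := hupper d hd
    rw [← key] at hd
    rcases Finset.mem_union.1 (MvPolynomial.support_add hd) with h | h
    · have := mul_wd_lower (sub_trunc_wd n A) hp d h
      omega
    · have := mul_wd_lower (sub_trunc_wd (n-1) B) hq d h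
      omega
  linear_combination hzero

/-- lattice point count -/
def Nn (m : ℕ) : ℕ := ∑ i ∈ Finset.range m, (m - 2 * i)

lemma Nn_rec (m : ℕ) : Nn (m + 2) = Nn m + (m + 2) := by
  rw [Nn, Finset.sum_range_succ' _ (m+1)]
  simp only [Nat.mul_zero, Nat.sub_zero]
  congr 1
  rw [Finset.sum_range_succ, show m + 2 - 2*(m+1) = 0 by omega, add_zero, Nn]
  apply Finset.sum_congr rfl
  intro i _
  omega

lemma Nn_closed : ∀ m : ℕ, Nn m = (m+1)^2/4
  | 0 => by simp [Nn]
  | 1 => by simp [Nn]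
  | (m+2) => by
    have h := Nn_closed m
    have hsq : (m+2+1)^2 = (m+1)^2 + 4*(m+2) := by ring
    have hrec := Nn_rec m
    set a := (m+1)^2
    set b := (m+2+1)^2
    omega

def Sfin (m : ℕ) : Finset (ℕ × ℕ) :=
  (Finset.range m).biUnion (fun i => (Finset.range (m - 2*i)).image (fun j => (i, j)))

lemma mem_Sfin {m : ℕ} {p : ℕ × ℕ} : p ∈ Sfin m ↔ 2 * p.1 + p.2 < m := by
  simp only [Sfin, Finset.mem_biUnion, Finset.mem_image, Finset.mem_range]
  constructor
  · rintro ⟨i, hi, j, hj, rfl⟩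
    simpa using by omega
  · intro h
    exact ⟨p.1, by omega, p.2, by omega, rfl⟩

lemma card_Sfin (m : ℕ) : (Sfin m).card = Nn m := by
  rw [Sfin, Finset.card_biUnion]
  · rw [Nn]
    apply Finset.sum_congr rfl
    intro i _
    rw [Finset.card_image_of_injective _ (fun a b h => by simpa using h), Finset.card_range]
  · intro i _ i' _ hne
    simp only [Finset.disjoint_left, Finset.mem_image, Finset.mem_range]
    rintro p ⟨j, hj, rfl⟩ ⟨j', hj', he⟩
    exact hne (congrArg Prod.fst he).symm

def dd (p : ℕ × ℕ) : Fin 2 →₀ ℕ := Finsupp.single 0 p.1 + Finsupp.single 1 p.2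

lemma dd_apply0 (p : ℕ × ℕ) : dd p 0 = p.1 := by
  simp [dd, Finsupp.single_apply]

lemma dd_apply1 (p : ℕ × ℕ) : dd p 1 = p.2 := by
  simp [dd, Finsupp.single_apply]

lemma dd_inj : Function.Injective dd := by
  intro p q h
  have h0 : dd p 0 = dd q 0 := by rw [h]
  have h1 : dd p 1 = dd q 1 := by rw [h]
  rw [dd_apply0, dd_apply0] at h0
  rw [dd_apply1, dd_apply1] at h1
  exact Prod.ext h0 h1

lemma wd_dd (p : ℕ × ℕ) : wd (dd p) = 2 * p.1 + p.2 := by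
  rw [wd, dd_apply0, dd_apply1]

def vFam (m : ℕ) : (Sfin m) → R2 := fun p => monomial (dd p.1) 1

lemma Vm_eq_span (m : ℕ) : Vm m = Submodule.span ℝ (Set.range (vFam m)) := by
  apply le_antisymm
  · intro g hg
    rw [← MvPolynomial.support_sum_monomial_coeff g]
    apply Submodule.sum_mem
    intro d hd
    have hwd : wd d < m := hg d hd
    have hmem : ((d 0, d 1) : ℕ × ℕ) ∈ Sfin m := mem_Sfin.2 (by
      have : wd d = 2 * d 0 + d 1 := rfl
      omega)
    have heq : (monomial d (coeff d g) : R2) = (coeff d g) • vFam m ⟨(d 0, d 1), hmem⟩ := by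
      rw [vFam, show dd (d 0, d 1) = d from (by rw [dd]; exact (fin2_decomp d).symm),
        smul_monomial, smul_eq_mul, mul_one]
    rw [heq]
    exact Submodule.smul_mem _ _ (Submodule.subset_span ⟨_, rfl⟩)
  · rw [Submodule.span_le]
    rintro x ⟨p, rfl⟩
    intro d hd
    rw [vFam, support_monomial, if_neg (one_ne_zero)] at hd
    rw [Finset.mem_singleton] at hd
    subst hd
    rw [wd_dd]
    exact mem_Sfin.1 p.2

lemma vFam_linind (m : ℕ) : LinearIndependent ℝ (vFam m) := by
  have hb := (MvPolynomial.basisMonomials (Fin 2) ℝ).linearIndependent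
  have h2 := hb.comp (fun p : Sfin m => dd p.1) (dd_inj.comp Subtype.val_injective)
  have heq : vFam m = (MvPolynomial.basisMonomials (Fin 2) ℝ) ∘ (fun p : Sfin m => dd p.1) := by
    funext p
    simp [vFam, Function.comp, MvPolynomial.coe_basisMonomials]
  rw [heq]
  exact h2

lemma Vm_findim (m : ℕ) : FiniteDimensional ℝ (Vm m) := by
  rw [Vm_eq_span]
  exact FiniteDimensional.span_of_finite ℝ (Set.finite_range _)

lemma finrank_Vm (m : ℕ) : Module.finrank ℝ (Vm m) = Nn m := by
  rw [Vm_eq_span, finrank_span_eq_card (vFam_linind m), Fintype.card_coe, card_Sfin]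

def Tfin (n : ℕ) : Finset (ℕ × ℕ) :=
  (Finset.range (n+1)).biUnion (fun i => (Finset.range (n+1-i)).image (fun j => (i, j)))

lemma mem_Tfin {n : ℕ} {p : ℕ × ℕ} : p ∈ Tfin n ↔ p.1 + p.2 ≤ n := by
  simp only [Tfin, Finset.mem_biUnion, Finset.mem_image, Finset.mem_range]
  constructor
  · rintro ⟨i, hi, j, hj, rfl⟩
    omega
  · intro h
    exact ⟨p.1, by omega, p.2, by omega, rfl⟩

lemma sum_desc : ∀ N : ℕ, ∑ i ∈ Finset.range (N+1), (N+1-i) = (N+1)*(N+2)/2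
  | 0 => by simp
  | (N+1) => by
    have ih := sum_desc N
    rw [Finset.sum_range_succ' _ (N+1)]
    have hcongr : ∑ i ∈ Finset.range (N+1), (N+1+1-(i+1)) = ∑ i ∈ Finset.range (N+1), (N+1-i) := by
      apply Finset.sum_congr rfl
      intro i _
      omega
    rw [hcongr, ih]
    have hpoly : (N+2)*(N+3) = (N+1)*(N+2) + 2*(N+2) := by ring
    have heven : ((N+1)*(N+2)) % 2 = 0 := Nat.even_iff.1 (Nat.even_mul_succ_self (N+1))
    set u := (N+1)*(N+2)
    set v := (N+2)*(N+3)
    omega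

lemma card_Tfin (n : ℕ) : (Tfin n).card = (n+1)*(n+2)/2 := by
  rw [Tfin, Finset.card_biUnion]
  · rw [← sum_desc n]
    apply Finset.sum_congr rfl
    intro i _
    rw [Finset.card_image_of_injective _ (fun a b h => by simpa using h), Finset.card_range]
  · intro i _ i' _ hne
    simp only [Finset.disjoint_left, Finset.mem_image, Finset.mem_range]
    rintro p ⟨j, hj, rfl⟩ ⟨j', hj', he⟩
    exact hne (congrArg Prod.fst he).symm

lemma final_count (n : ℕ) (hn : 1 ≤ n) :
    Nn (2*n+1) = Nn n + Nn (n-1) + (n+1)*(n+2)/2 := by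
  rw [Nn_closed, Nn_closed, Nn_closed]
  have h1 : n - 1 + 1 = n := by omega
  rw [h1]
  rcases Nat.even_or_odd n with ⟨a, rfl⟩ | ⟨a, rfl⟩
  · have e1 : (2*(a+a)+1+1)^2 = 16*a^2 + 16*a + 4 := by ring
    have e2 : (a+a+1)^2 = 4*a^2+4*a+1 := by ring
    have e3 : (a+a)^2 = 4*a^2 := by ring
    have e4 : (a+a+1)*(a+a+2) = 4*a^2+6*a+2 := by ring
    rw [e1, e2, e3, e4]
    set c := a^2
    omega
  · have e1 : (2*(2*a+1)+1+1)^2 = 16*a^2 + 32*a + 16 := by ring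
    have e2 : (2*a+1+1)^2 = 4*a^2+8*a+4 := by ring
    have e3 : (2*a+1)^2 = 4*a^2+4*a+1 := by ring
    have e4 : (2*a+1+1)*(2*a+1+2) = 4*a^2+10*a+6 := by ring
    rw [e1, e2, e3, e4]
    set c := a^2
    omega

lemma Mon_mem_Vm {n a b : ℕ} (h : a + b ≤ n) : Mon a b ∈ Vm (2*n+1) := by
  intro d hd
  rw [Mon_monomial, show Finsupp.single 0 a + Finsupp.single 1 b = dd (a, b) from rfl,
    support_monomial, if_neg one_ne_zero, Finset.mem_singleton] at hd
  subst hd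
  rw [wd_dd]
  simp only
  omega

theorem main_result (n : ℕ) (hn : 1 ≤ n) :
    Module.Finite ℝ (R2 ⧸ Ip n) ∧
      Module.finrank ℝ (R2 ⧸ Ip n) = (n + 1) * (n + 2) / 2 := by
  classical
  haveI hfd1 := Vm_findim (2*n+1)
  haveI hfd2 := Vm_findim n
  haveI hfd3 := Vm_findim (n-1)
  set φ : (Vm (2*n+1)) →ₗ[ℝ] (R2 ⧸ Ip n) :=
    (Ideal.Quotient.mkₐ ℝ (Ip n)).toLinearMap.comp (Vm (2*n+1)).subtype with hφ
  have hrange : LinearMap.range φ = ⊤ := by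
    rw [← top_le_iff, ← genSet_span_top n, Submodule.span_le]
    rintro x ⟨p, hp, rfl⟩
    exact ⟨⟨Mon p.1 p.2, Mon_mem_Vm hp⟩, rfl⟩
  have hsurj : Function.Surjective φ := LinearMap.range_eq_top.1 hrange
  have hfinite : Module.Finite ℝ (R2 ⧸ Ip n) := Module.Finite.of_surjective φ hsurj
  refine ⟨hfinite, ?_⟩
  -- upper bound
  have hset : genSet n =
      ↑((Tfin n).image (fun p : ℕ × ℕ => Ideal.Quotient.mkₐ ℝ (Ip n) (Mon p.1 p.2))) := by
    ext x
    simp only [genSet, Set.mem_image, Set.mem_setOf_eq, Finset.coe_image, Finset.mem_coe,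
      Finset.mem_image, mem_Tfin]
  have hupper : Module.finrank ℝ (R2 ⧸ Ip n) ≤ (n+1)*(n+2)/2 := by
    have h1 := finrank_span_le_card (R := ℝ)
      (↑((Tfin n).image (fun p : ℕ × ℕ => Ideal.Quotient.mkₐ ℝ (Ip n) (Mon p.1 p.2))) :
        Set (R2 ⧸ Ip n))
    have hsp2 : Submodule.span ℝ
        (↑((Tfin n).image (fun p : ℕ × ℕ => Ideal.Quotient.mkₐ ℝ (Ip n) (Mon p.1 p.2))) :
          Set (R2 ⧸ Ip n)) = ⊤ := by
      rw [← hset]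
      exact genSet_span_top n
    rw [hsp2, finrank_top, Finset.toFinset_coe] at h1
    calc Module.finrank ℝ (R2 ⧸ Ip n) ≤ _ := h1
      _ ≤ (Tfin n).card := Finset.card_image_le
      _ = (n+1)*(n+2)/2 := card_Tfin n
  -- lower bound
  set U1 : Submodule ℝ R2 := (Vm n).map (LinearMap.mulRight ℝ (P (n+1))) with hU1
  set U2 : Submodule ℝ R2 := (Vm (n-1)).map (LinearMap.mulRight ℝ (P (n+2))) with hU2
  haveI : Module.Finite ℝ U1 := Module.Finite.map _ _
  haveI : Module.Finite ℝ U2 := Module.Finite.map _ _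
  have hker : ∀ x : LinearMap.ker φ, (x : Vm (2*n+1)).1 ∈ U1 ⊔ U2 := by
    intro x
    have hxI : ((x : Vm (2*n+1)) : R2) ∈ Ip n := by
      have hx0 : φ x.1 = 0 := LinearMap.mem_ker.1 x.2
      have hx0' : Ideal.Quotient.mk (Ip n) ((x : Vm (2*n+1)) : R2) = 0 := hx0
      exact Ideal.Quotient.eq_zero_iff_mem.1 hx0'
    obtain ⟨A, B, hA, hB, hEq⟩ := trunc_decomp n hn hxI (x : Vm (2*n+1)).2
    rw [hEq]
    exact Submodule.add_mem_sup ⟨A, hA, rfl⟩ ⟨B, hB, rfl⟩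
  set θ : LinearMap.ker φ →ₗ[ℝ] (U1 ⊔ U2 : Submodule ℝ R2) :=
    LinearMap.codRestrict _ ((Vm (2*n+1)).subtype.comp (LinearMap.ker φ).subtype) hker with hθ
  have hinj : Function.Injective θ := by
    intro x y h
    have h2 := Subtype.ext_iff.1 h
    exact Subtype.ext (Subtype.ext h2)
  have hkerle : Module.finrank ℝ (LinearMap.ker φ) ≤
      Module.finrank ℝ (U1 ⊔ U2 : Submodule ℝ R2) :=
    LinearMap.finrank_le_finrank_of_injective hinj
  have hsup : Module.finrank ℝ (U1 ⊔ U2 : Submodule ℝ R2) ≤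
      Module.finrank ℝ U1 + Module.finrank ℝ U2 :=
    Submodule.finrank_add_le_finrank_add_finrank U1 U2
  have hU1le : Module.finrank ℝ U1 ≤ Nn n := by
    rw [← finrank_Vm n]
    exact Submodule.finrank_map_le _ _
  have hU2le : Module.finrank ℝ U2 ≤ Nn (n-1) := by
    rw [← finrank_Vm (n-1)]
    exact Submodule.finrank_map_le _ _
  have hrn := LinearMap.finrank_range_add_finrank_ker φ
  rw [hrange, finrank_top, finrank_Vm (2*n+1)] at hrn
  have hfc := final_count n hn
  set t := (n+1)*(n+2)
  omega

end

theorem stmt15 (n : ℕ) (hn : 1 ≤ n) :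
    Module.Finite ℝ
        (MvPolynomial (Fin 2) ℝ ⧸ Ideal.span {f (n + 1), f (n + 2)}) ∧
      Module.finrank ℝ
          (MvPolynomial (Fin 2) ℝ ⧸ Ideal.span {f (n + 1), f (n + 2)})
        = (n + 1) * (n + 2) / 2 := by
  rw [show Ideal.span {f (n + 1), f (n + 2)} = Ip n from span_f_eq_span_P n]
  exact main_result n hn
end

section
/- Let n ≥ 1 be an integer and let p, q ∈ ℝ[s,t] be weighted-homogeneous polynomials of weighted degrees n+1 and n+2 respectively (with s of degree 2 and t of degree 1), such that every common divisor of p and q is a nonzero constant. Then for every integer d ≥ 0, the image under the quotient map ℝ[s,t] → ℝ[s,t]/(p, q) of the ℝ-subspace of weighted-homogeneous polynomials of weighted degree d is finite-dimensional, of dimension equal to the coefficient of x^d in the formal power series (1-x^{n+1})(1-x^{n+2})/((1-x)(1-x^2)) ∈ ℝ[[x]]. -/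
open MvPolynomial Finset

lemma comp_mul {σ : Type*} [DecidableEq σ] (w : σ → ℕ) (f g : MvPolynomial σ ℝ) (e c : ℕ)
    (hg : MvPolynomial.IsWeightedHomogeneous w g e) :
    weightedHomogeneousComponent w c (f * g) =
      if e ≤ c then (weightedHomogeneousComponent w (c - e) f) * g else 0 := by
  ext m
  rw [coeff_weightedHomogeneousComponent]
  by_cases hwm : Finsupp.weight w m = c
  · rw [if_pos hwm]
    by_cases hec : e ≤ c
    · rw [if_pos hec, coeff_mul, coeff_mul]
      apply Finset.sum_congr rfl
      intro x hx
      rw [Finset.HasAntidiagonal.mem_antidiagonal] at hx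
      by_cases hg2 : coeff x.2 g = 0
      · rw [hg2, mul_zero, mul_zero]
      · have h2 : Finsupp.weight w x.2 = e := hg hg2
        have h1 : Finsupp.weight w x.1 + e = c := by
          rw [← h2, ← map_add, hx, hwm]
        rw [coeff_weightedHomogeneousComponent, if_pos (by omega)]
    · rw [if_neg hec, coeff_zero, coeff_mul]
      apply Finset.sum_eq_zero
      intro x hx
      rw [Finset.HasAntidiagonal.mem_antidiagonal] at hx
      by_cases hg2 : coeff x.2 g = 0
      · rw [hg2, mul_zero]
      · have h2 : Finsupp.weight w x.2 = e := hg hg2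
        have h1 : Finsupp.weight w x.1 + e = c := by
          rw [← h2, ← map_add, hx, hwm]
        omega
  · rw [if_neg hwm]
    by_cases hec : e ≤ c
    · rw [if_pos hec, coeff_mul]
      symm
      apply Finset.sum_eq_zero
      intro x hx
      rw [Finset.HasAntidiagonal.mem_antidiagonal] at hx
      by_cases hg2 : coeff x.2 g = 0
      · rw [hg2, mul_zero]
      by_cases hf2 : coeff x.1 (weightedHomogeneousComponent w (c - e) f) = 0
      · rw [hf2, zero_mul]
      · have h2 : Finsupp.weight w x.2 = e := hg hg2
        have h1 : Finsupp.weight w x.1 = c - e := by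
          by_contra h
          exact hf2 (by rw [coeff_weightedHomogeneousComponent, if_neg h])
        exfalso
        apply hwm
        rw [← hx, map_add, h1, h2]
        omega
    · rw [if_neg hec, coeff_zero]

lemma weight_eval (m : Fin 2 →₀ ℕ) : Finsupp.weight ![2,1] m = 2 * m 0 + m 1 := by
  rw [Finsupp.weight_apply, Finsupp.sum_fintype]
  · simp [Fin.sum_univ_two]; ring
  · intro i; simp

noncomputable def mexp (d i : ℕ) : Fin 2 →₀ ℕ :=
  Finsupp.single 0 i + Finsupp.single 1 (d - 2*i)

lemma mexp_apply0 (d i : ℕ) : mexp d i 0 = i := by simp [mexp]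
lemma mexp_apply1 (d i : ℕ) : mexp d i 1 = d - 2*i := by
  simp [mexp, Finsupp.single_apply]

lemma mexp_eq (m : Fin 2 →₀ ℕ) (d : ℕ) (h : 2 * m 0 + m 1 = d) : mexp d (m 0) = m := by
  ext j
  match j with
  | ⟨0, _⟩ => rw [show (⟨0, by omega⟩ : Fin 2) = 0 from rfl, mexp_apply0]
  | ⟨1, _⟩ => rw [show (⟨1, by omega⟩ : Fin 2) = 1 from rfl, mexp_apply1]; omega

lemma W_eq_span (d : ℕ) :
    weightedHomogeneousSubmodule ℝ ![2,1] d =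
      Submodule.span ℝ (Set.range fun i : Fin (d/2+1) => (monomial (mexp d i) (1:ℝ))) := by
  apply le_antisymm
  · intro p hp
    rw [mem_weightedHomogeneousSubmodule] at hp
    rw [← support_sum_monomial_coeff p]
    apply Submodule.sum_mem
    intro m hm
    have hw : 2 * m 0 + m 1 = d := by
      have := hp (mem_support_iff.mp hm)
      rwa [weight_eval] at this
    have h0 : m 0 < d/2 + 1 := by omega
    have : monomial m (coeff m p) = coeff m p • monomial m (1:ℝ) := by
      rw [smul_monomial, smul_eq_mul, mul_one]
    rw [this]
    apply Submodule.smul_mem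
    apply Submodule.subset_span
    exact ⟨⟨m 0, h0⟩, by simp only []; rw [mexp_eq m d hw]⟩
  · rw [Submodule.span_le]
    rintro _ ⟨i, rfl⟩
    rw [SetLike.mem_coe, mem_weightedHomogeneousSubmodule]
    apply isWeightedHomogeneous_monomial
    rw [weight_eval, mexp_apply0, mexp_apply1]
    have : (i : ℕ) < d/2+1 := i.isLt
    omega

lemma W_finrank (d : ℕ) :
    Module.finrank ℝ (weightedHomogeneousSubmodule ℝ ![2,1] d) = d/2 + 1 := by
  rw [W_eq_span]
  have hg : Function.Injective (fun i : Fin (d/2+1) => mexp d (i : ℕ)) := by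
    intro i j hij
    have : mexp d i 0 = mexp d j 0 := by
      simp only [] at hij; rw [hij]
    rw [mexp_apply0, mexp_apply0] at this
    exact Fin.ext this
  have hli : LinearIndependent ℝ (fun i : Fin (d/2+1) => (monomial (mexp d i) (1:ℝ))) := by
    have h2 := (MvPolynomial.basisMonomials (Fin 2) ℝ).linearIndependent.comp _ hg
    rw [MvPolynomial.coe_basisMonomials] at h2
    exact h2
  rw [finrank_span_eq_card hli, Fintype.card_fin]

lemma W_fd (d : ℕ) :
    FiniteDimensional ℝ (weightedHomogeneousSubmodule ℝ ![2,1] d) := by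
  rw [W_eq_span]
  exact FiniteDimensional.span_of_finite ℝ (Set.finite_range _)

section Main

variable {n : ℕ} {p q : MvPolynomial (Fin 2) ℝ}

local notation "W" => weightedHomogeneousSubmodule ℝ ![2,1]

lemma not_unit_of_homog (g : MvPolynomial (Fin 2) ℝ) (k : ℕ) (hk : 1 ≤ k)
    (hg : MvPolynomial.IsWeightedHomogeneous ![2,1] g k) : ¬ IsUnit g := by
  intro h
  obtain ⟨r, hr⟩ := h.exists_right_inv
  have h1 : weightedHomogeneousComponent ![2,1] 0 (r * g) = 0 := by
    rw [comp_mul ![2,1] r g k 0 hg, if_neg (by omega)]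
  rw [mul_comm r g] at h1
  rw [hr] at h1
  have h2 : weightedHomogeneousComponent ![2,1] 0 (1 : MvPolynomial (Fin 2) ℝ) = 1 :=
    (isWeightedHomogeneous_one ℝ _).weightedHomogeneousComponent_same
  rw [h2] at h1
  exact one_ne_zero h1

lemma p_ne_zero (hn : 1 ≤ n) (hp : MvPolynomial.IsWeightedHomogeneous ![2,1] p (n+1))
    (hq : MvPolynomial.IsWeightedHomogeneous ![2,1] q (n+2))
    (hcop : ∀ d : MvPolynomial (Fin 2) ℝ, d ∣ p → d ∣ q → IsUnit d) : p ≠ 0 := by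
  intro h
  exact not_unit_of_homog q (n+2) (by omega) hq (hcop q (h ▸ dvd_zero q) dvd_rfl)

lemma q_ne_zero (hn : 1 ≤ n) (hp : MvPolynomial.IsWeightedHomogeneous ![2,1] p (n+1))
    (hq : MvPolynomial.IsWeightedHomogeneous ![2,1] q (n+2))
    (hcop : ∀ d : MvPolynomial (Fin 2) ℝ, d ∣ p → d ∣ q → IsUnit d) : q ≠ 0 := by
  intro h
  exact not_unit_of_homog p (n+1) (by omega) hp (hcop p dvd_rfl (h ▸ dvd_zero p))


noncomputable def Msub (r : MvPolynomial (Fin 2) ℝ) (c : ℕ) :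
    Submodule ℝ (MvPolynomial (Fin 2) ℝ) :=
  Submodule.map (LinearMap.mulLeft ℝ r) (weightedHomogeneousSubmodule ℝ ![2,1] c)

lemma mem_Msub {r : MvPolynomial (Fin 2) ℝ} {c : ℕ} {x : MvPolynomial (Fin 2) ℝ} :
    x ∈ Msub r c ↔ ∃ g ∈ W c, r * g = x := by
  simp [Msub, Submodule.mem_map, LinearMap.mulLeft_apply]

lemma Msub_finrank {r : MvPolynomial (Fin 2) ℝ} (hr : r ≠ 0) (c : ℕ) :
    Module.finrank ℝ (Msub r c) = c/2 + 1 := by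
  rw [← W_finrank c]
  have hinj : Function.Injective (LinearMap.mulLeft ℝ r) := by
    intro x y hxy
    exact mul_left_cancel₀ hr hxy
  exact (Submodule.equivMapOfInjective _ hinj _).finrank_eq.symm

lemma Msub_fd (r : MvPolynomial (Fin 2) ℝ) (c : ℕ) : FiniteDimensional ℝ (Msub r c) := by
  haveI := W_fd c
  exact Module.Finite.map _ _

lemma Msub_le_W {r : MvPolynomial (Fin 2) ℝ} {k c d : ℕ}
    (hr : MvPolynomial.IsWeightedHomogeneous ![2,1] r k) (h : k + c = d) :
    Msub r c ≤ W d := by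
  rintro x hx
  obtain ⟨g, hg, rfl⟩ := mem_Msub.mp hx
  rw [mem_weightedHomogeneousSubmodule] at hg ⊢
  exact h ▸ hr.mul hg

lemma mem_decomp (hp : MvPolynomial.IsWeightedHomogeneous ![2,1] p (n+1))
    (hq : MvPolynomial.IsWeightedHomogeneous ![2,1] q (n+2))
    {f : MvPolynomial (Fin 2) ℝ} {d : ℕ}
    (hf : f ∈ Ideal.span {p, q}) (hfd : f ∈ W d) :
    ∃ g h : MvPolynomial (Fin 2) ℝ, f = p * g + q * h ∧ g ∈ W (d-(n+1)) ∧ h ∈ W (d-(n+2)) ∧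
      (d < n+1 → g = 0) ∧ (d < n+2 → h = 0) := by
  obtain ⟨a, b, hab⟩ := Ideal.mem_span_pair.mp hf
  set g := if n+1 ≤ d then weightedHomogeneousComponent ![2,1] (d-(n+1)) a else 0 with hgdef
  set h := if n+2 ≤ d then weightedHomogeneousComponent ![2,1] (d-(n+2)) b else 0 with hhdef
  have h1 : weightedHomogeneousComponent ![2,1] d (a * p) = g * p := by
    rw [comp_mul ![2,1] a p (n+1) d hp, hgdef]
    split_ifs with hle
    · rfl
    · rw [zero_mul]
  have h2 : weightedHomogeneousComponent ![2,1] d (b * q) = h * q := by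
    rw [comp_mul ![2,1] b q (n+2) d hq, hhdef]
    split_ifs with hle
    · rfl
    · rw [zero_mul]
  have hfe : f = p * g + q * h := by
    conv_lhs => rw [← (mem_weightedHomogeneousSubmodule _ _ _ _ |>.mp hfd).weightedHomogeneousComponent_same]
    rw [← hab, map_add, h1, h2, mul_comm g p, mul_comm h q]
  refine ⟨g, h, hfe, ?_, ?_, ?_, ?_⟩
  · rw [hgdef]; split_ifs
    · exact weightedHomogeneousComponent_mem _ _ _
    · exact Submodule.zero_mem _
  · rw [hhdef]; split_ifs
    · exact weightedHomogeneousComponent_mem _ _ _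
    · exact Submodule.zero_mem _
  · intro hd; rw [hgdef, if_neg (by omega)]
  · intro hd; rw [hhdef, if_neg (by omega)]

lemma caseA (hp : MvPolynomial.IsWeightedHomogeneous ![2,1] p (n+1))
    (hq : MvPolynomial.IsWeightedHomogeneous ![2,1] q (n+2)) {d : ℕ} (hd : d < n+1) :
    W d ⊓ Submodule.restrictScalars ℝ (Ideal.span {p, q}) = ⊥ := by
  rw [eq_bot_iff]
  rintro f ⟨hfW, hfI⟩
  obtain ⟨g, h, hfe, _, _, hg0, hh0⟩ := mem_decomp hp hq hfI hfW
  rw [hfe, hg0 hd, hh0 (by omega), mul_zero, mul_zero, add_zero]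
  exact Submodule.zero_mem _

lemma p_mem_span : p ∈ Ideal.span {p, q} :=
  Ideal.subset_span (by simp)

lemma q_mem_span : q ∈ Ideal.span {p, q} :=
  Ideal.subset_span (by simp)

lemma Msub_le_I {r : MvPolynomial (Fin 2) ℝ} (hr : r ∈ Ideal.span {p, q}) (c : ℕ) :
    Msub r c ≤ Submodule.restrictScalars ℝ (Ideal.span {p, q}) := by
  rintro x hx
  obtain ⟨g, hg, rfl⟩ := mem_Msub.mp hx
  exact Ideal.mul_mem_right g _ hr

lemma caseB (hp : MvPolynomial.IsWeightedHomogeneous ![2,1] p (n+1))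
    (hq : MvPolynomial.IsWeightedHomogeneous ![2,1] q (n+2)) {d : ℕ}
    (hd1 : n+1 ≤ d) (hd2 : d < n+2) :
    W d ⊓ Submodule.restrictScalars ℝ (Ideal.span {p, q}) = Msub p (d-(n+1)) := by
  apply le_antisymm
  · rintro f ⟨hfW, hfI⟩
    obtain ⟨g, h, hfe, hg, _, _, hh0⟩ := mem_decomp hp hq hfI hfW
    rw [hfe, hh0 hd2, mul_zero, add_zero]
    exact mem_Msub.mpr ⟨g, hg, rfl⟩
  · exact le_inf (Msub_le_W hp (by omega)) (Msub_le_I p_mem_span _)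

lemma caseC (hp : MvPolynomial.IsWeightedHomogeneous ![2,1] p (n+1))
    (hq : MvPolynomial.IsWeightedHomogeneous ![2,1] q (n+2)) {d : ℕ}
    (hd : n+2 ≤ d) :
    W d ⊓ Submodule.restrictScalars ℝ (Ideal.span {p, q})
      = Msub p (d-(n+1)) ⊔ Msub q (d-(n+2)) := by
  apply le_antisymm
  · rintro f ⟨hfW, hfI⟩
    obtain ⟨g, h, hfe, hg, hh, _, _⟩ := mem_decomp hp hq hfI hfW
    rw [hfe]
    exact Submodule.add_mem _ (Submodule.mem_sup_left (mem_Msub.mpr ⟨g, hg, rfl⟩))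
      (Submodule.mem_sup_right (mem_Msub.mpr ⟨h, hh, rfl⟩))
  · apply sup_le
    · exact le_inf (Msub_le_W hp (by omega)) (Msub_le_I p_mem_span _)
    · exact le_inf (Msub_le_W hq (by omega)) (Msub_le_I q_mem_span _)


lemma inf_le_Mpq (hp : MvPolynomial.IsWeightedHomogeneous ![2,1] p (n+1))
    (hq : MvPolynomial.IsWeightedHomogeneous ![2,1] q (n+2))
    (hcop : ∀ d : MvPolynomial (Fin 2) ℝ, d ∣ p → d ∣ q → IsUnit d) {d : ℕ} (hd : n+2 ≤ d)
    {f : MvPolynomial (Fin 2) ℝ} (hf : f ∈ Msub p (d-(n+1)) ⊓ Msub q (d-(n+2))) :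
    ∃ u ∈ W (d - (2*n+3)), f = p * q * u ∧ (d < 2*n+3 → f = 0) := by
  obtain ⟨hf1, hf2⟩ := hf
  obtain ⟨g, hg, hfg⟩ := mem_Msub.mp hf1
  obtain ⟨h, hh, hfh⟩ := mem_Msub.mp hf2
  have hrel : IsRelPrime q p := fun e heq hep => hcop e hep heq
  have hdvd : q ∣ g := by
    apply hrel.dvd_of_dvd_mul_left (z := g)
    exact ⟨h, by rw [hfg, ← hfh]⟩
  obtain ⟨u, rfl⟩ := hdvd
  have hgW : q * u ∈ W (d - (n+1)) := hg
  have hcomp : q * u = if n+2 ≤ d-(n+1) then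
      q * weightedHomogeneousComponent ![2,1] (d-(n+1)-(n+2)) u else 0 := by
    conv_lhs => rw [← (mem_weightedHomogeneousSubmodule _ _ _ _ |>.mp hgW).weightedHomogeneousComponent_same]
    rw [mul_comm q u, comp_mul ![2,1] u q (n+2) _ hq]
    split_ifs
    · rw [mul_comm]
    · rfl
  by_cases hcase : n+2 ≤ d-(n+1)
  · rw [if_pos hcase] at hcomp
    refine ⟨weightedHomogeneousComponent ![2,1] (d-(n+1)-(n+2)) u, ?_, ?_, ?_⟩
    · have := weightedHomogeneousComponent_mem ![2,1] u (d-(n+1)-(n+2))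
      have heq : d-(n+1)-(n+2) = d - (2*n+3) := by omega
      rw [heq]
      exact weightedHomogeneousComponent_mem ![2,1] u (d - (2*n+3))
    · rw [← hfg, hcomp]; ring
    · intro hlt; omega
  · rw [if_neg hcase] at hcomp
    refine ⟨0, Submodule.zero_mem _, ?_, fun _ => ?_⟩
    · rw [← hfg, hcomp, mul_zero, mul_zero]
    · rw [← hfg, hcomp, mul_zero]

lemma inf1 (hp : MvPolynomial.IsWeightedHomogeneous ![2,1] p (n+1))
    (hq : MvPolynomial.IsWeightedHomogeneous ![2,1] q (n+2))
    (hcop : ∀ d : MvPolynomial (Fin 2) ℝ, d ∣ p → d ∣ q → IsUnit d) {d : ℕ}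
    (hd : n+2 ≤ d) (hd2 : d < 2*n+3) :
    Msub p (d-(n+1)) ⊓ Msub q (d-(n+2)) = ⊥ := by
  rw [eq_bot_iff]
  intro f hf
  obtain ⟨u, _, _, h0⟩ := inf_le_Mpq hp hq hcop hd hf
  rw [Submodule.mem_bot]
  exact h0 hd2

lemma inf2 (hp : MvPolynomial.IsWeightedHomogeneous ![2,1] p (n+1))
    (hq : MvPolynomial.IsWeightedHomogeneous ![2,1] q (n+2))
    (hcop : ∀ d : MvPolynomial (Fin 2) ℝ, d ∣ p → d ∣ q → IsUnit d) {d : ℕ}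
    (hd : 2*n+3 ≤ d) :
    Msub p (d-(n+1)) ⊓ Msub q (d-(n+2)) = Msub (p*q) (d-(2*n+3)) := by
  apply le_antisymm
  · intro f hf
    obtain ⟨u, hu, hfe, _⟩ := inf_le_Mpq hp hq hcop (by omega) hf
    exact mem_Msub.mpr ⟨u, hu, hfe.symm⟩
  · intro f hf
    obtain ⟨u, hu, rfl⟩ := mem_Msub.mp hf
    constructor
    · refine mem_Msub.mpr ⟨q * u, ?_, by ring⟩
      have := hq.mul (mem_weightedHomogeneousSubmodule _ _ _ _ |>.mp hu)
      rw [mem_weightedHomogeneousSubmodule]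
      have heq : (n+2) + (d - (2*n+3)) = d - (n+1) := by omega
      rwa [heq] at this
    · refine mem_Msub.mpr ⟨p * u, ?_, by ring⟩
      have := hp.mul (mem_weightedHomogeneousSubmodule _ _ _ _ |>.mp hu)
      rw [mem_weightedHomogeneousSubmodule]
      have heq : (n+1) + (d - (2*n+3)) = d - (n+2) := by omega
      rwa [heq] at this


end Main

section PS
open PowerSeries

noncomputable def S1 : PowerSeries ℝ := PowerSeries.mk (fun _ => (1:ℝ))
noncomputable def S2 : PowerSeries ℝ := PowerSeries.mk (fun e => if Even e then (1:ℝ) else 0)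

lemma hS1 : S1 * (1 - PowerSeries.X) = 1 := by
  ext k
  rw [mul_sub, mul_one, map_sub, ← pow_one (PowerSeries.X : PowerSeries ℝ),
    PowerSeries.coeff_mul_X_pow']
  simp only [S1, PowerSeries.coeff_mk, PowerSeries.coeff_one]
  rcases Nat.eq_zero_or_pos k with hk | hk
  · subst hk; norm_num
  · rw [if_pos (by omega : 1 ≤ k), if_neg (by omega)]; ring

lemma hS2 : S2 * (1 - PowerSeries.X ^ 2) = 1 := by
  ext k
  rw [mul_sub, mul_one, map_sub, PowerSeries.coeff_mul_X_pow']
  simp only [S2, PowerSeries.coeff_mk, PowerSeries.coeff_one]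
  rcases lt_or_ge k 2 with hk | hk
  · interval_cases k <;> norm_num
  · have he : Even (k-2) ↔ Even k := by
      rw [Nat.even_sub hk]
      simp
    rw [if_pos hk, if_neg (by omega : ¬ k = 0)]
    simp only [he]
    split_ifs <;> ring

lemma count_even_real (d : ℕ) :
    ∑ k ∈ range (d+1), (if Even k then (1:ℝ) else 0) = ((d/2 + 1 : ℕ) : ℝ) := by
  induction d with
  | zero => rw [Finset.sum_range_one]; norm_num
  | succ d ih =>
    rw [Finset.sum_range_succ, ih]
    rcases Nat.even_or_odd (d+1) with h | h
    · rw [if_pos h]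
      obtain ⟨m, hm⟩ := h
      have : (d+1)/2 + 1 = (d/2 + 1) + 1 := by omega
      rw [this]
      push_cast
      ring
    · rw [if_neg (Nat.not_even_iff_odd.mpr h)]
      obtain ⟨m, hm⟩ := h
      have : (d+1)/2 + 1 = d/2 + 1 := by omega
      rw [this, add_zero]

lemma coeff_S1S2 (e : ℕ) : PowerSeries.coeff (R := ℝ) e (S1 * S2) = ((e/2 + 1 : ℕ) : ℝ) := by
  rw [PowerSeries.coeff_mul, Finset.Nat.sum_antidiagonal_eq_sum_range_succ_mk]
  simp only [S1, S2, PowerSeries.coeff_mk, one_mul]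
  have hr := Finset.sum_range_reflect (fun j => if Even j then (1:ℝ) else 0) (e+1)
  simp only [Nat.add_sub_cancel] at hr
  rw [hr, count_even_real]

lemma coeffRHS (n d : ℕ) :
    PowerSeries.coeff (R := ℝ) d
        ((1 - PowerSeries.X ^ (n + 1)) * (1 - PowerSeries.X ^ (n + 2)) *
          (1 - PowerSeries.X)⁻¹ * (1 - PowerSeries.X ^ 2)⁻¹)
      = ((d/2 + 1 : ℕ) : ℝ)
        - (if n+1 ≤ d then (((d-(n+1))/2 + 1 : ℕ) : ℝ) else 0)
        - (if n+2 ≤ d then (((d-(n+2))/2 + 1 : ℕ) : ℝ) else 0)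
        + (if 2*n+3 ≤ d then (((d-(2*n+3))/2 + 1 : ℕ) : ℝ) else 0) := by
  have e1 : (1 - PowerSeries.X : PowerSeries ℝ)⁻¹ = S1 := by
    rw [eq_comm, PowerSeries.eq_inv_iff_mul_eq_one (by simp)]
    exact hS1
  have e2 : ((1 - PowerSeries.X ^ 2 : PowerSeries ℝ))⁻¹ = S2 := by
    rw [eq_comm, PowerSeries.eq_inv_iff_mul_eq_one (by simp)]
    exact hS2
  rw [e1, e2]
  have expand : (1 - PowerSeries.X ^ (n+1)) * (1 - PowerSeries.X ^ (n+2)) * S1 * S2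
      = S1 * S2 - PowerSeries.X ^ (n+1) * (S1 * S2) - PowerSeries.X ^ (n+2) * (S1 * S2)
        + PowerSeries.X ^ (2*n+3) * (S1 * S2) := by
    have hx : (PowerSeries.X : PowerSeries ℝ) ^ (2*n+3)
        = (PowerSeries.X : PowerSeries ℝ) ^ (n+1) * (PowerSeries.X : PowerSeries ℝ) ^ (n+2) := by
      rw [← pow_add]
      congr 1
      omega
    rw [hx]; ring
  rw [expand, map_add, map_sub, map_sub, PowerSeries.coeff_X_pow_mul',
    PowerSeries.coeff_X_pow_mul', PowerSeries.coeff_X_pow_mul', coeff_S1S2]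
  congr 1
  · congr 1
    · congr 1
      split_ifs with h
      · rw [coeff_S1S2]
      · rfl
    · split_ifs with h
      · rw [coeff_S1S2]
      · rfl
  · split_ifs with h
    · rw [coeff_S1S2]
    · rfl

end PS

section Assemble

variable {n : ℕ} {p q : MvPolynomial (Fin 2) ℝ}

local notation "W" => weightedHomogeneousSubmodule ℝ ![2,1]

lemma rank_nullity (p q : MvPolynomial (Fin 2) ℝ) (d : ℕ) :
    FiniteDimensional ℝ
      (Submodule.map (Ideal.Quotient.mkₐ ℝ (Ideal.span {p, q})).toLinearMap (W d)) ∧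
    Module.finrank ℝ
      (Submodule.map (Ideal.Quotient.mkₐ ℝ (Ideal.span {p, q})).toLinearMap (W d))
      + Module.finrank ℝ
        (W d ⊓ Submodule.restrictScalars ℝ (Ideal.span {p, q}) :
          Submodule ℝ (MvPolynomial (Fin 2) ℝ))
      = d/2 + 1 := by
  haveI := W_fd d
  set f := (Ideal.Quotient.mkₐ ℝ (Ideal.span {p, q})).toLinearMap with hf
  set φ := f.domRestrict (W d) with hφ
  have hrange : LinearMap.range φ = Submodule.map f (W d) :=
    LinearMap.range_domRestrict _ _
  have fd : FiniteDimensional ℝ (Submodule.map f (W d)) := by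
    rw [← hrange]; infer_instance
  have hker : LinearMap.ker f = Submodule.restrictScalars ℝ (Ideal.span {p, q}) := by
    ext x
    simp only [LinearMap.mem_ker, hf, AlgHom.toLinearMap_apply, Ideal.Quotient.mkₐ_eq_mk,
      Submodule.restrictScalars_mem]
    exact Ideal.Quotient.eq_zero_iff_mem
  have hkerφ : LinearMap.ker φ
      = Submodule.comap (W d).subtype
          (W d ⊓ Submodule.restrictScalars ℝ (Ideal.span {p, q})) := by
    rw [hφ, LinearMap.ker_domRestrict, hker]
    ext x
    simp only [Submodule.mem_comap, Submodule.coe_subtype, Submodule.mem_inf]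
    exact ⟨fun h => ⟨x.2, h⟩, fun h => h.2⟩
  have hkrank : Module.finrank ℝ (LinearMap.ker φ)
      = Module.finrank ℝ
        (W d ⊓ Submodule.restrictScalars ℝ (Ideal.span {p, q}) :
          Submodule ℝ (MvPolynomial (Fin 2) ℝ)) := by
    rw [hkerφ]
    exact (Submodule.comapSubtypeEquivOfLe inf_le_left).finrank_eq
  refine ⟨fd, ?_⟩
  have := LinearMap.finrank_range_add_finrank_ker φ
  rw [hrange, hkrank, W_finrank d] at this
  exact this

end Assemble

theorem stmt18 (n : ℕ) (hn : 1 ≤ n) (p q : MvPolynomial (Fin 2) ℝ)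
    (hp : MvPolynomial.IsWeightedHomogeneous ![2, 1] p (n + 1))
    (hq : MvPolynomial.IsWeightedHomogeneous ![2, 1] q (n + 2))
    (hcop : ∀ d : MvPolynomial (Fin 2) ℝ, d ∣ p → d ∣ q → IsUnit d)
    (d : ℕ) :
    FiniteDimensional ℝ
        (Submodule.map (Ideal.Quotient.mkₐ ℝ (Ideal.span {p, q})).toLinearMap
          (MvPolynomial.weightedHomogeneousSubmodule ℝ ![2, 1] d)) ∧
      (Module.finrank ℝ
          (Submodule.map (Ideal.Quotient.mkₐ ℝ (Ideal.span {p, q})).toLinearMap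
            (MvPolynomial.weightedHomogeneousSubmodule ℝ ![2, 1] d)) : ℝ)
        = PowerSeries.coeff (R := ℝ) d
            ((1 - PowerSeries.X ^ (n + 1)) * (1 - PowerSeries.X ^ (n + 2)) *
              (1 - PowerSeries.X)⁻¹ * (1 - PowerSeries.X ^ 2)⁻¹) := by
  obtain ⟨fd, hQK⟩ := rank_nullity p q d
  refine ⟨fd, ?_⟩
  rw [coeffRHS n d]
  have hp0 : p ≠ 0 := p_ne_zero hn hp hq hcop
  have hq0 : q ≠ 0 := q_ne_zero hn hp hq hcop
  set QD := Module.finrank ℝ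
      (Submodule.map (Ideal.Quotient.mkₐ ℝ (Ideal.span {p, q})).toLinearMap
        (MvPolynomial.weightedHomogeneousSubmodule ℝ ![2, 1] d)) with hQD
  set K := (weightedHomogeneousSubmodule ℝ ![2,1] d ⊓
      Submodule.restrictScalars ℝ (Ideal.span {p, q}) :
        Submodule ℝ (MvPolynomial (Fin 2) ℝ)) with hKdef
  rcases lt_or_ge d (n+1) with hA | hA
  · have hK : Module.finrank ℝ K = 0 := by
      rw [hKdef, caseA hp hq hA]
      exact finrank_bot ℝ _
    rw [if_neg (by omega), if_neg (by omega), if_neg (by omega)]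
    have h1 : QD = d/2 + 1 := by omega
    rw [h1]
    push_cast
    ring
  · rcases lt_or_ge d (n+2) with hB | hC
    · have hK : Module.finrank ℝ K = (d-(n+1))/2 + 1 := by
        rw [hKdef, caseB hp hq hA hB]
        exact Msub_finrank hp0 _
      rw [if_pos hA, if_neg (by omega), if_neg (by omega)]
      have h1 : QD + ((d-(n+1))/2 + 1) = d/2 + 1 := by omega
      have h2 : (QD : ℝ) + (((d-(n+1))/2 + 1 : ℕ) : ℝ) = ((d/2 + 1 : ℕ) : ℝ) := by
        exact_mod_cast congrArg (Nat.cast : ℕ → ℝ) h1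
      linarith
    · haveI := Msub_fd p (d-(n+1))
      haveI := Msub_fd q (d-(n+2))
      have hKeq : K = Msub p (d-(n+1)) ⊔ Msub q (d-(n+2)) := caseC hp hq hC
      have hsum := Submodule.finrank_sup_add_finrank_inf_eq
        (Msub p (d-(n+1))) (Msub q (d-(n+2)))
      rw [Msub_finrank hp0, Msub_finrank hq0] at hsum
      rw [if_pos hA, if_pos hC]
      rcases lt_or_ge d (2*n+3) with hC1 | hC2
      · rw [inf1 hp hq hcop hC hC1] at hsum
        rw [if_neg (by omega)]
        have hK : Module.finrank ℝ K = (d-(n+1))/2 + 1 + ((d-(n+2))/2 + 1) := by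
          rw [hKeq]
          have hb : Module.finrank ℝ (⊥ : Submodule ℝ (MvPolynomial (Fin 2) ℝ)) = 0 :=
            finrank_bot ℝ _
          omega
        have h1 : QD + ((d-(n+1))/2 + 1 + ((d-(n+2))/2 + 1)) = d/2 + 1 := by omega
        have h2 : (QD : ℝ) + ((((d-(n+1))/2 + 1 : ℕ) : ℝ) + (((d-(n+2))/2 + 1 : ℕ) : ℝ))
            = ((d/2 + 1 : ℕ) : ℝ) := by
          exact_mod_cast congrArg (Nat.cast : ℕ → ℝ) h1
        linarith
      · rw [inf2 hp hq hcop hC2, Msub_finrank (mul_ne_zero hp0 hq0)] at hsum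
        rw [if_pos hC2]
        have hK : Module.finrank ℝ K + ((d-(2*n+3))/2 + 1)
            = (d-(n+1))/2 + 1 + ((d-(n+2))/2 + 1) := by
          rw [hKeq]
          omega
        have h1 : QD + Module.finrank ℝ K = d/2 + 1 := hQK
        have h2 : ((QD : ℝ) + (Module.finrank ℝ K : ℝ) = ((d/2 + 1 : ℕ) : ℝ)) := by
          exact_mod_cast congrArg (Nat.cast : ℕ → ℝ) h1
        have h3 : (Module.finrank ℝ K : ℝ) + (((d-(2*n+3))/2 + 1 : ℕ) : ℝ)
            = (((d-(n+1))/2 + 1 : ℕ) : ℝ) + (((d-(n+2))/2 + 1 : ℕ) : ℝ) := by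
          exact_mod_cast congrArg (Nat.cast : ℕ → ℝ) hK
        linarith
end
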